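/- arXiv:1911.07298 — 7 statements merged into one kernel-verified Lean document; each statement's English description precedes it below -/
import Mathlib

section
/- Let G be a finite directed graph on vertex set V and F ⊆ V with |F| ≤ f. Suppose that for every partition (A,B) of V with A−F and B−F nonempty, either A (f+1)-propagates to B−F avoiding F, or B (f+1)-propagates to A−F avoiding F (condition SC with parameter F). Then the graph G−F (obtained by deleting all vertices of F) has a unique source component in its strongly connected component decomposition. -/
open Set

variable {V : Type*}

/-- A (directed) path: nonempty list of distinct vertices with consecutive edges. -/
def DiPath (E : V → V → Prop) (p : List V) : Prop :=
  p ≠ [] ∧ p.Nodup ∧ p.Chain' E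

/-- A path excludes `F` if none of its internal vertices lies in `F`. -/
def Excludes (F : Set V) (p : List V) : Prop :=
  ∀ x ∈ p.tail.dropLast, x ∉ F

/-- A path from (a vertex of) `A` to `v`. -/
def PathFromTo (E : V → V → Prop) (A : Set V) (v : V) (p : List V) : Prop :=
  DiPath E p ∧ (∃ a ∈ A, p.head? = some a) ∧ p.getLast? = some v

/-- There exist `n` pairwise internally-disjoint `A`-`v` paths excluding `F`
(sharing only the terminal `v`). -/
def DisjPaths (E : V → V → Prop) (F A : Set V) (v : V) (n : ℕ) : Prop :=
  ∃ P : Fin n → List V,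
    (∀ i, PathFromTo E A v (P i) ∧ Excludes F (P i)) ∧
    (∀ i j, i ≠ j → ∀ x, x ∈ P i → x ∈ P j → x = v)

/-- `A` (f+1)-propagates to every vertex of `B` avoiding `F`. -/
def Propagates (E : V → V → Prop) (f : ℕ) (F A B : Set V) : Prop :=
  ∀ v ∈ B, DisjPaths E F A v (f + 1)

/-- Condition SC with parameter `F`. -/
def CondSC (E : V → V → Prop) (f : ℕ) (F : Set V) : Prop :=
  ∀ A B : Set V, A ∪ B = Set.univ → A ∩ B = ∅ →
    (A \ F).Nonempty → (B \ F).Nonempty →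
    Propagates E f F A (B \ F) ∨ Propagates E f F B (A \ F)

/-- Reachability within the vertex set `W`. -/
def ReachIn (E : V → V → Prop) (W : Set V) : V → V → Prop :=
  Relation.ReflTransGen (fun a b => a ∈ W ∧ b ∈ W ∧ E a b)

/-- `S` is a (maximal) strongly connected component of the induced subgraph on `W`. -/
def IsSCCIn (E : V → V → Prop) (W S : Set V) : Prop :=
  S.Nonempty ∧ S ⊆ W ∧ (∀ u ∈ S, ∀ v ∈ S, ReachIn E W u v) ∧
  ∀ T, S ⊆ T → T ⊆ W → (∀ u ∈ T, ∀ v ∈ T, ReachIn E W u v) → T = S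

/-- `S` is a source component of `G − F`: an SCC of the induced subgraph on `V − F`
receiving no edge from a vertex of `V − F` outside `S`. -/
def IsSourceComponent (E : V → V → Prop) (F S : Set V) : Prop :=
  IsSCCIn E (Set.univ \ F) S ∧ ∀ u, u ∉ F → u ∉ S → ∀ s ∈ S, ¬ E u s

/-- In-neighborhood of `T` contained in `B`. -/
def inNbr (E : V → V → Prop) (B T : Set V) : Set V :=
  {u ∈ B | ∃ v ∈ T, E u v}

/-- `N(F→S)`: vertices of `F` with an edge into `S`. -/
def NFS (E : V → V → Prop) (F S : Set V) : Set V :=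
  {w ∈ F | ∃ s ∈ S, E w s}

/-- Edge relation of the subgraph induced on `U`. -/
def inducedE (E : V → V → Prop) (U : Set V) : V → V → Prop :=
  fun a b => a ∈ U ∧ b ∈ U ∧ E a b

/-- Condition NC with parameter `F`. -/
def CondNC (E : V → V → Prop) (f : ℕ) (F : Set V) : Prop :=
  ∀ L C R : Set V, L ∪ C ∪ R = Set.univ →
    L ∩ C = ∅ → L ∩ R = ∅ → C ∩ R = ∅ →
    (L \ F).Nonempty → (R \ F).Nonempty →
    f < (inNbr E (R ∪ C) (L \ F)).ncard ∨ f < (inNbr E (L ∪ C) (R \ F)).ncard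

/-! A vertex of `G − F` with the fewest ancestors in `G − F` lies in a source component: an
edge entering its component from outside would produce a vertex with strictly fewer ancestors.

No edge enters a source component `S` from `V − F − S`, so a path into `S` whose internal
vertices avoid `F` starts in `S` or in `F`. For two source components `S₁ ≠ S₂`, apply SC to
the partition `(V − S₂, S₂)`: either `f + 1` disjoint paths from `V − S₂` reach `S₂`, and
their distinct sources all lie in `F`, contradicting `|F| ≤ f`; or a path from `S₂` reaches
`S₁`, and its source lies in both. -/

def sccOf (E : V → V → Prop) (W : Set V) (v : V) : Set V :=
  {u ∈ W | ReachIn E W u v ∧ ReachIn E W v u}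

lemma sccOf_isSCCIn (E : V → V → Prop) {W : Set V} {v : V} (hv : v ∈ W) :
    IsSCCIn E W (sccOf E W v) := by
  have hv_mem : v ∈ sccOf E W v := ⟨hv, .refl, .refl⟩
  refine ⟨⟨v, hv_mem⟩, fun u hu => hu.1, ?_, ?_⟩
  · rintro u ⟨-, huv, -⟩ w ⟨-, -, hvw⟩
    exact huv.trans hvw
  · intro T hST hTW hT
    exact (hST.antisymm fun t ht =>
      ⟨hTW ht, hT t ht v (hST hv_mem), hT v (hST hv_mem) t ht⟩).symm

lemma IsSCCIn.eq_of_mem {E : V → V → Prop} {W S₁ S₂ : Set V}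
    (h₁ : IsSCCIn E W S₁) (h₂ : IsSCCIn E W S₂) {x : V} (hx₁ : x ∈ S₁) (hx₂ : x ∈ S₂) :
    S₁ = S₂ := by
  obtain ⟨-, hW₁, hc₁, hmax₁⟩ := h₁
  obtain ⟨-, hW₂, hc₂, hmax₂⟩ := h₂
  have hc : ∀ u ∈ S₁ ∪ S₂, ∀ w ∈ S₁ ∪ S₂, ReachIn E W u w := by
    intro u hu w hw
    have hux : ReachIn E W u x := hu.elim (hc₁ u · x hx₁) (hc₂ u · x hx₂)
    have hxw : ReachIn E W x w := hw.elim (hc₁ x hx₁ w ·) (hc₂ x hx₂ w ·)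
    exact hux.trans hxw
  have hW : S₁ ∪ S₂ ⊆ W := union_subset hW₁ hW₂
  exact (hmax₁ _ subset_union_left hW hc).symm.trans (hmax₂ _ subset_union_right hW hc)

lemma exists_isSourceComponent [Finite V] (E : V → V → Prop) {F : Set V}
    (hF : (univ \ F).Nonempty) : ∃ S, IsSourceComponent E F S := by
  set W := univ \ F
  let ancestors : V → Set V := fun v => {u | ReachIn E W u v}
  obtain ⟨v₀, hv₀, hmin⟩ := exists_min_image W (fun v => (ancestors v).ncard) W.toFinite hF
  have hscc := sccOf_isSCCIn E hv₀
  refine ⟨sccOf E W v₀, hscc, fun u huF huS s hs hus => ?_⟩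
  have hu : u ∈ W := ⟨mem_univ u, huF⟩
  have huv₀ : ReachIn E W u v₀ :=
    (Relation.ReflTransGen.single ⟨hu, hscc.2.1 hs, hus⟩).trans hs.2.1
  have hv₀u : ¬ ReachIn E W v₀ u := fun h => huS ⟨hu, huv₀, h⟩
  have hlt : ancestors u ⊂ ancestors v₀ :=
    ⟨fun x hx => hx.trans huv₀, fun h => hv₀u (h (Relation.ReflTransGen.refl))⟩
  exact (hmin u hu).not_gt (ncard_lt_ncard hlt (toFinite _))

lemma mem_of_isChain_of_getLast_mem {E : V → V → Prop} {F S : Set V}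
    (hS : ∀ u, u ∉ F → u ∉ S → ∀ s ∈ S, ¬ E u s) :
    ∀ {a : V} {l : List V}, (a :: l).IsChain E → (∀ y ∈ l, y ∉ F) →
      (a :: l).getLast (List.cons_ne_nil a l) ∈ S → a ∉ F → a ∈ S
  | _, [], _, _, hlast, _ => hlast
  | a, b :: l, hchain, hl, hlast, haF => by
    have hbS : b ∈ S := mem_of_isChain_of_getLast_mem hS (List.isChain_cons_cons.mp hchain).2
      (fun y hy => hl y (List.mem_cons_of_mem b hy)) hlast (hl b List.mem_cons_self)
    by_contra haS
    exact hS a haF haS b hbS (List.isChain_cons_cons.mp hchain).1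

lemma IsSourceComponent.head_mem {E : V → V → Prop} {F S : Set V}
    (hS : IsSourceComponent E F S) {p : List V} {a v : V} (hp : DiPath E p)
    (hpF : Excludes F p) (ha : p.head? = some a) (hv : p.getLast? = some v) (hvS : v ∈ S)
    (haF : a ∉ F) : a ∈ S := by
  obtain ⟨-, -, hchain⟩ := hp
  cases p with
  | nil => simp at ha
  | cons b l =>
    obtain rfl : a = b := by simpa using ha.symm
    have hlast : (a :: l).getLast (List.cons_ne_nil a l) = v := by
      simpa [List.getLast?_eq_some_getLast (List.cons_ne_nil a l)] using hv
    have hvF : v ∉ F := (hS.1.2.1 hvS).2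
    refine mem_of_isChain_of_getLast_mem hS.2 hchain (fun y hy => ?_) (hlast ▸ hvS) haF
    have hl : l ≠ [] := List.ne_nil_of_mem hy
    rw [← List.dropLast_append_getLast hl, List.mem_append, List.mem_singleton] at hy
    rcases hy with hy | rfl
    · exact hpF y hy
    · rwa [← List.getLast_cons hl, hlast]

lemma IsSourceComponent.le_ncard_of_disjPaths [Finite V] {E : V → V → Prop} {F S : Set V}
    (hS : IsSourceComponent E F S) {v : V} (hv : v ∈ S) {n : ℕ}
    (hpaths : DisjPaths E F Sᶜ v n) : n ≤ F.ncard := by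
  obtain ⟨P, hP, hdisj⟩ := hpaths
  have hvF : v ∉ F := (hS.1.2.1 hv).2
  have hhead : ∀ i, ∃ a ∈ F, (P i).head? = some a := by
    intro i
    obtain ⟨⟨hp, ⟨a, haS, ha⟩, hlast⟩, hpF⟩ := hP i
    exact ⟨a, by_contra fun haF => haS (hS.head_mem hp hpF ha hlast hv haF), ha⟩
  choose g hgF hg using hhead
  have hinj : Function.Injective g := by
    intro i j hij
    by_contra hij'
    have hgj : g i ∈ P j := hij ▸ List.mem_of_mem_head? (hg j)
    exact hvF (hdisj i j hij' (g i) (List.mem_of_mem_head? (hg i)) hgj ▸ hgF i)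
  calc n = Nat.card (Fin n) := (Nat.card_fin n).symm
    _ ≤ Nat.card F := Nat.card_le_card_of_injective (fun i => ⟨g i, hgF i⟩)
        fun i j h => hinj (congrArg Subtype.val h)
    _ = F.ncard := Nat.card_coe_set_eq F

lemma IsSourceComponent.eq_of_condSC [Finite V] {E : V → V → Prop} {f : ℕ} {F S₁ S₂ : Set V}
    (hF : F.ncard ≤ f) (hSC : CondSC E f F)
    (h₁ : IsSourceComponent E F S₁) (h₂ : IsSourceComponent E F S₂) : S₁ = S₂ := by
  by_contra hne
  have hdisj : ∀ x ∈ S₁, x ∉ S₂ := fun x hx₁ hx₂ => hne (h₁.1.eq_of_mem h₂.1 hx₁ hx₂)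
  obtain ⟨v₁, hv₁⟩ := h₁.1.1
  obtain ⟨v₂, hv₂⟩ := h₂.1.1
  have hv₁F : v₁ ∉ F := (h₁.1.2.1 hv₁).2
  have hv₂F : v₂ ∉ F := (h₂.1.2.1 hv₂).2
  rcases hSC S₂ᶜ S₂ (compl_union_self S₂) (compl_inter_self S₂) ⟨v₁, hdisj v₁ hv₁, hv₁F⟩
    ⟨v₂, hv₂, hv₂F⟩ with hprop | hprop
  · have := h₂.le_ncard_of_disjPaths hv₂ (hprop v₂ ⟨hv₂, hv₂F⟩)
    omega
  · obtain ⟨P, hP, -⟩ := hprop v₁ ⟨hdisj v₁ hv₁, hv₁F⟩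
    obtain ⟨⟨hp, ⟨a, haS₂, ha⟩, hlast⟩, hpF⟩ := hP 0
    exact hdisj a (h₁.head_mem hp hpF ha hlast hv₁ (h₂.1.2.1 haS₂).2) haS₂

/-- If `G` satisfies condition SC with parameter `F`, `|F| ≤ f < |V|`, then `G − F`
has a unique source component. -/
theorem unique_source_component [Fintype V] (E : V → V → Prop) (f : ℕ) (F : Set V)
    (hF : F.ncard ≤ f) (hfn : f < Fintype.card V)
    (hSC : CondSC E f F) :
    ∃! S : Set V, IsSourceComponent E F S := by
  have hW : (univ \ F).Nonempty := by
    by_contra h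
    rw [not_nonempty_iff_eq_empty, sdiff_eq_empty] at h
    have := ncard_le_ncard h
    rw [ncard_univ, Nat.card_eq_fintype_card] at this
    omega
  obtain ⟨S, hS⟩ := exists_isSourceComponent E hW
  exact ⟨S, hS, fun S' hS' => hS'.eq_of_condSC hF hSC hS⟩
end

section
/- Let G be a finite directed graph satisfying condition SC with parameter F (|F| ≤ f), and let S be the unique source component of G−F. Then for every pair of vertices u ∈ S ∪ N(F→S) and v ∈ S, there exists a path from u to v in G none of whose internal vertices lie in F, where N(F→S) denotes the set of vertices in F having an edge into S. -/
open Set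

variable {V : Type*}

/-!
`S` is strongly connected inside `G − F`, so any two of its vertices are joined by a path
of `G − F`, which has no vertex in `F` at all. A vertex `w ∈ N(F→S)` is handled by
prepending it to such a path that starts at an out-neighbour of `w` in `S`.
-/

-- When the walk revisits the vertex it is about to step to, cut it back to that earlier visit.
theorem exists_nodup_isChain_of_reflTransGen {α : Type*} {r : α → α → Prop} {a b : α}
    (h : Relation.ReflTransGen r a b) :
    ∃ l : List α, l.Nodup ∧ l.IsChain r ∧ l.head? = some a ∧ l.getLast? = some b := by
  induction h with
  | refl => exact ⟨[a], List.nodup_singleton a, List.isChain_singleton a, rfl, rfl⟩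
  | @tail b c _ hbc ih =>
    obtain ⟨l, hnd, hch, hhd, hlast⟩ := ih
    have hne : l ≠ [] := by rintro rfl; simp at hhd
    by_cases hc : c ∈ l
    · obtain ⟨s, t, rfl⟩ := List.append_of_mem hc
      refine ⟨s ++ [c], hnd.sublist (List.Sublist.append_left (by simp) s),
        hch.prefix ⟨t, by simp⟩, ?_, by simp⟩
      cases s <;> simpa using hhd
    · refine ⟨l ++ [c], List.nodup_append.2 ⟨hnd, List.nodup_singleton c, ?_⟩,
        List.isChain_append.2 ⟨hch, List.isChain_singleton c, ?_⟩, ?_, by simp⟩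
      · rintro x hx y hy rfl
        exact hc (List.mem_singleton.1 hy ▸ hx)
      · rintro x hx y hy
        rw [hlast, Option.mem_some_iff] at hx
        rw [List.head?_singleton, Option.mem_some_iff] at hy
        exact hx ▸ hy ▸ hbc
      · rwa [List.head?_append_of_ne_nil _ hne]

theorem ReachIn.exists_diPath {E : V → V → Prop} {W : Set V} {a b : V} (ha : a ∈ W)
    (h : ReachIn E W a b) :
    ∃ p : List V, DiPath E p ∧ p.head? = some a ∧ p.getLast? = some b ∧ ∀ x ∈ p, x ∈ W := by
  obtain ⟨p, hnd, hch, hhd, hlast⟩ := exists_nodup_isChain_of_reflTransGen h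
  have hne : p ≠ [] := by rintro rfl; simp at hhd
  refine ⟨p, ⟨hne, hnd, hch.imp fun _ _ hxy => hxy.2.2⟩, hhd, hlast, ?_⟩
  refine hch.induction (· ∈ W) p (fun _ _ hxy _ => hxy.2.1) fun hne' => ?_
  obtain ⟨x, t, rfl⟩ := List.exists_cons_of_ne_nil hne'
  rw [List.head?_cons, Option.some_inj] at hhd
  exact hhd ▸ ha

theorem DiPath.cons {E : V → V → Prop} {p : List V} {u s : V} (hp : DiPath E p)
    (hhd : p.head? = some s) (hu : u ∉ p) (hus : E u s) : DiPath E (u :: p) := by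
  refine ⟨List.cons_ne_nil u p, List.nodup_cons.2 ⟨hu, hp.2.1⟩, List.isChain_cons.2 ⟨?_, hp.2.2⟩⟩
  rintro y hy
  rw [hhd, Option.mem_some_iff] at hy
  exact hy ▸ hus

theorem excludes_of_forall_not_mem {F : Set V} {p : List V} (hp : ∀ x ∈ p, x ∉ F) :
    Excludes F p :=
  fun x hx => hp x ((p.tail.dropLast_sublist.trans p.tail_sublist).mem hx)

theorem excludes_cons_of_forall_not_mem {F : Set V} {p : List V} (u : V)
    (hp : ∀ x ∈ p, x ∉ F) : Excludes F (u :: p) :=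
  fun x hx => hp x (p.dropLast_sublist.mem hx)

theorem paths_into_source_component_general (E : V → V → Prop) (F S : Set V)
    (hS : IsSourceComponent E F S) :
    ∀ u ∈ S ∪ NFS E F S, ∀ v ∈ S,
      ∃ p : List V, DiPath E p ∧ p.head? = some u ∧ p.getLast? = some v ∧ Excludes F p := by
  obtain ⟨⟨-, hSsub, hreach, -⟩, -⟩ := hS
  have path_in_S : ∀ s ∈ S, ∀ v ∈ S, ∃ p : List V,
      DiPath E p ∧ p.head? = some s ∧ p.getLast? = some v ∧ ∀ x ∈ p, x ∉ F :=
    fun s hs v hv => by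
      obtain ⟨p, hp, hhd, hlast, hpW⟩ := (hreach s hs v hv).exists_diPath (hSsub hs)
      exact ⟨p, hp, hhd, hlast, fun x hx => (hpW x hx).2⟩
  rintro u (hu | ⟨huF, s, hs, hus⟩) v hv
  · obtain ⟨p, hp, hhd, hlast, hpF⟩ := path_in_S u hu v hv
    exact ⟨p, hp, hhd, hlast, excludes_of_forall_not_mem hpF⟩
  · obtain ⟨p, hp, hhd, hlast, hpF⟩ := path_in_S s hs v hv
    exact ⟨u :: p, hp.cons hhd (fun hu => hpF u hu huF) hus, rfl,
      by simp [List.getLast?_cons, hlast], excludes_cons_of_forall_not_mem u hpF⟩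

/-- From every `u ∈ S ∪ N(F→S)` there is a path to every `v ∈ S` excluding `F`. -/
theorem paths_into_source_component [Fintype V] (E : V → V → Prop) (f : ℕ) (F S : Set V)
    (hF : F.ncard ≤ f) (hSC : CondSC E f F)
    (hS : IsSourceComponent E F S)
    (hUniq : ∀ S', IsSourceComponent E F S' → S' = S) :
    ∀ u ∈ S ∪ NFS E F S, ∀ v ∈ S,
      ∃ p : List V, DiPath E p ∧ p.head? = some u ∧ p.getLast? = some v ∧ Excludes F p :=
  paths_into_source_component_general E F S hS
end

section
/- Let G be a finite directed graph satisfying condition SC with parameter F (|F| ≤ f), and let S be the unique source component of G−F. Then S (f+1)-propagates avoiding F to every vertex of V − S − F; that is, for every v ∈ V − S − F there exist f+1 paths from S to v, pairwise sharing only the terminal v, with no internal vertex in F. -/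
open Set

variable {V : Type*}

/-! Apply SC to the partition `(S, V − S)`. If `V − S` propagated to some `s ∈ S − F`, each of
the `f + 1` paths would have to start in `F`: its internal vertices avoid `F`, and `S` receives
no edge from `V − S − F`. Their starting points are pairwise distinct, so `|F| ≥ f + 1`. -/

namespace List

theorem IsChain.imp_of_mem_dropLast_imp {α : Type*} {R R' : α → α → Prop} {l : List α}
    (H : ∀ a b, a ∈ l.dropLast → R a b → R' a b) (h : IsChain R l) : IsChain R' l := by
  induction h with grind

end List

section

variable {E : V → V → Prop} {F A S : Set V} {v : V} {p : List V}

theorem Excludes.notMem_dropLast {a : V} {l : List V} (hl : Excludes F (a :: l)) (ha : a ∉ F) :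
    ∀ x ∈ (a :: l).dropLast, x ∉ F := by
  cases l with
  | nil => simp
  | cons b l =>
    rw [List.dropLast_cons_cons]
    rintro x (_ | ⟨_, hx⟩)
    exacts [ha, hl x hx]

theorem PathFromTo.head_mem_of_isSource (hsrc : ∀ u, u ∉ F → u ∉ S → ∀ s ∈ S, ¬ E u s)
    (hAS : Disjoint A S) (hp : PathFromTo E A v p) (hexc : Excludes F p) (hv : v ∈ S)
    {a : V} (ha : p.head? = some a) : a ∈ F := by
  obtain ⟨rest, rfl⟩ := List.head?_eq_some_iff.mp ha
  by_contra haF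
  have hchain : (a :: rest).IsChain (fun x y => x ∉ F ∧ E x y) :=
    hp.1.2.2.imp_of_mem_dropLast_imp fun x y hx hxy => ⟨hexc.notMem_dropLast haF x hx, hxy⟩
  have haS : a ∉ S := by
    obtain ⟨a', ha'A, ha'⟩ := hp.2.1
    cases ha.symm.trans ha'
    exact hAS.notMem_of_mem_left ha'A
  have hall := List.IsChain.induction (· ∉ S) _ hchain
    (fun x y ⟨hxF, hxy⟩ hxS hyS => hsrc x hxF hxS y hyS hxy) (fun _ => haS)
  exact hall v (List.mem_of_getLast? hp.2.2) hv

theorem DisjPaths.le_ncard {n : ℕ} {H : Set V} (hH : H.Finite) (hvH : v ∉ H)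
    (hP : DisjPaths E F A v n)
    (hhead : ∀ p, PathFromTo E A v p → Excludes F p → ∀ a, p.head? = some a → a ∈ H) :
    n ≤ H.ncard := by
  obtain ⟨P, hP, hdisj⟩ := hP
  choose a _ hhead_eq using fun i => (hP i).1.2.1
  have haH i : a i ∈ H := hhead (P i) (hP i).1 (hP i).2 (a i) (hhead_eq i)
  have hmem i : a i ∈ P i := List.mem_of_mem_head? (hhead_eq i)
  have hinj : Function.Injective a := by
    intro i j hij
    by_contra hne
    refine hvH ?_
    rw [← hdisj i j hne (a i) (hmem i) (hij ▸ hmem j)]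
    exact haH i
  calc n = (Set.range a).ncard := by rw [Set.ncard_range_of_injective hinj, Nat.card_fin]
    _ ≤ H.ncard := Set.ncard_le_ncard (Set.range_subset_iff.mpr haH) hH

end

theorem source_component_propagates_general [Fintype V] (E : V → V → Prop) (f : ℕ) (F S : Set V)
    (hF : F.ncard ≤ f) (hSC : CondSC E f F)
    (hS : IsSourceComponent E F S) :
    Propagates E f F S ((Set.univ \ S) \ F) := by
  obtain ⟨⟨⟨s, hs⟩, hSsub, -⟩, hsrc⟩ := hS
  have hsF : s ∉ F := (hSsub hs).2
  intro v hv
  rcases hSC S (Set.univ \ S) (Set.union_sdiff_cancel (Set.subset_univ S))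
    (Set.inter_sdiff_self _ _) ⟨s, hs, hsF⟩ ⟨v, hv⟩ with hprop | hback
  · exact hprop v hv
  · have := (hback s ⟨hs, hsF⟩).le_ncard F.toFinite hsF fun p hp hexc _ =>
      hp.head_mem_of_isSource hsrc Set.disjoint_sdiff_left hexc hs
    omega

/-- The unique source component `S` of `G − F` (f+1)-propagates avoiding `F`
to every vertex of `V − S − F`. -/
theorem source_component_propagates [Fintype V] (E : V → V → Prop) (f : ℕ) (F S : Set V)
    (hF : F.ncard ≤ f) (hSC : CondSC E f F)
    (hS : IsSourceComponent E F S)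
    (hUniq : ∀ S', IsSourceComponent E F S' → S' = S) :
    Propagates E f F S ((Set.univ \ S) \ F) :=
  source_component_propagates_general E f F S hF hSC hS
end

section
/- Let G be a finite directed graph satisfying condition SC with parameter F (|F| ≤ f), let S be the unique source component of G−F, and let H be the subgraph of G induced on S ∪ N(F→S), where N(F→S) is the set of vertices of F with an edge into S. Then H also satisfies condition SC with parameter F: for every partition (A,B) of S ∪ N(F→S) with A−F and B−F nonempty, either A (f+1)-propagates to B−F avoiding F within H, or B (f+1)-propagates to A−F avoiding F within H. -/
/-!
Every edge into the source component `S` of `G − F` starts in `S` or in `F`. Hence a path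
whose internal vertices avoid `F` and which ends in `S` runs inside `S` except possibly for its
first vertex, which lies in `S ∪ N(F→S)`. So the paths witnessing condition SC in `G` for a
partition of `S ∪ N(F→S)`, extended by putting every other vertex on the `A` side, already live
in the induced subgraph `H`.
-/

open Set

variable {V : Type*}

/-- Condition SC with parameter `F` for the subgraph of `G` induced on `W`. -/
def CondSCOn (E : V → V → Prop) (f : ℕ) (F W : Set V) : Prop :=
  ∀ A B : Set V, A ∪ B = W → A ∩ B = ∅ →
    (A \ F).Nonempty → (B \ F).Nonempty →
    Propagates (inducedE E W) f F A (B \ F) ∨ Propagates (inducedE E W) f F B (A \ F)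

section InducedPaths

variable {E : V → V → Prop} {F S W : Set V}

lemma mem_union_NFS_of_edge {u s : V} (hS : ∀ u ∉ F, ∀ s ∈ S, E u s → u ∈ S)
    (hs : s ∈ S) (hus : E u s) : u ∈ S ∪ NFS E F S := by
  by_cases hu : u ∈ F
  · exact Or.inr ⟨hu, s, hs, hus⟩
  · exact Or.inl (hS u hu s hs hus)

lemma List.IsChain.forall_mem_of_getLast_mem (hS : ∀ u ∉ F, ∀ s ∈ S, E u s → u ∈ S) :
    ∀ {l : List V}, l.IsChain E → (∀ x ∈ l.dropLast, x ∉ F) →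
      (∀ v ∈ l.getLast?, v ∈ S) → ∀ x ∈ l, x ∈ S
  | [], _, _, _ => by simp
  | [b], _, _, hlast => by simpa using hlast
  | b :: c :: r, hchain, hF, hlast => by
    rw [List.isChain_cons_cons] at hchain
    rw [List.dropLast_cons_cons] at hF
    have hrest : ∀ x ∈ c :: r, x ∈ S :=
      forall_mem_of_getLast_mem hS hchain.2 (fun x hx => hF x (List.mem_cons_of_mem b hx))
        (by simpa only [List.getLast?_cons_cons] using hlast)
    have hb : b ∈ S := hS b (hF b List.mem_cons_self) c (hrest c List.mem_cons_self) hchain.1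
    exact List.forall_mem_cons.mpr ⟨hb, hrest⟩

lemma forall_mem_union_NFS_of_excludes (hS : ∀ u ∉ F, ∀ s ∈ S, E u s → u ∈ S)
    {p : List V} {v : V} (hchain : p.IsChain E) (hexc : Excludes F p)
    (hlast : p.getLast? = some v) (hv : v ∈ S) : ∀ x ∈ p, x ∈ S ∪ NFS E F S := by
  obtain _ | ⟨a, _ | ⟨c, r⟩⟩ := p
  · simp
  · simp_all
  rw [List.isChain_cons_cons] at hchain
  rw [List.getLast?_cons_cons] at hlast
  have hrest : ∀ x ∈ c :: r, x ∈ S :=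
    hchain.2.forall_mem_of_getLast_mem hS hexc (by simp [hlast, hv])
  have ha : a ∈ S ∪ NFS E F S := mem_union_NFS_of_edge hS (hrest c List.mem_cons_self) hchain.1
  exact List.forall_mem_cons.mpr ⟨ha, fun x hx => Or.inl (hrest x hx)⟩

lemma PathFromTo.induced {A : Set V} {v : V} {p : List V} (hp : PathFromTo E A v p)
    (hW : ∀ x ∈ p, x ∈ W) : PathFromTo (inducedE E W) (A ∩ W) v p := by
  obtain ⟨⟨hne, hnodup, hchain⟩, ⟨a, ha, hhead⟩, hlast⟩ := hp
  refine ⟨⟨hne, hnodup, ?_⟩, ⟨a, ⟨ha, hW a (List.mem_of_mem_head? hhead)⟩, hhead⟩, hlast⟩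
  exact (List.IsChain.iff_mem.mp hchain).imp fun x y ⟨hx, hy, hxy⟩ => ⟨hW x hx, hW y hy, hxy⟩

lemma DisjPaths.mono_source {A A' : Set V} {v : V} {n : ℕ} (hAA' : A ⊆ A')
    (h : DisjPaths E F A v n) : DisjPaths E F A' v n := by
  obtain ⟨P, hP, hdisj⟩ := h
  refine ⟨P, fun i => ?_, hdisj⟩
  obtain ⟨⟨hpath, ⟨a, ha, hhead⟩, hlast⟩, hexc⟩ := hP i
  exact ⟨⟨hpath, ⟨a, hAA' ha, hhead⟩, hlast⟩, hexc⟩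

lemma DisjPaths.induced_NFS (hS : ∀ u ∉ F, ∀ s ∈ S, E u s → u ∈ S) {A : Set V} {v : V}
    {n : ℕ} (hv : v ∈ S) (h : DisjPaths E F A v n) :
    DisjPaths (inducedE E (S ∪ NFS E F S)) F (A ∩ (S ∪ NFS E F S)) v n := by
  obtain ⟨P, hP, hdisj⟩ := h
  refine ⟨P, fun i => ⟨(hP i).1.induced ?_, (hP i).2⟩, hdisj⟩
  exact forall_mem_union_NFS_of_excludes hS (hP i).1.1.2.2 (hP i).2 (hP i).1.2.2 hv

lemma Propagates.induced_NFS (hS : ∀ u ∉ F, ∀ s ∈ S, E u s → u ∈ S) {f : ℕ}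
    {A A' T : Set V} (hA : A ∩ (S ∪ NFS E F S) ⊆ A') (hT : T ⊆ S)
    (h : Propagates E f F A T) : Propagates (inducedE E (S ∪ NFS E F S)) f F A' T :=
  fun v hv => ((h v hv).induced_NFS hS (hT hv)).mono_source hA

end InducedPaths

theorem induced_source_satisfies_SC_general (E : V → V → Prop) (f : ℕ) (F S : Set V)
    (hSC : CondSC E f F)
    (hS : IsSourceComponent E F S) :
    CondSCOn E f F (S ∪ NFS E F S) := by
  intro A B hAB hdisj hA hB
  have hclosed : ∀ u ∉ F, ∀ s ∈ S, E u s → u ∈ S :=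
    fun u hu s hs hus => by_contra fun huS => hS.2 u hu huS s hs hus
  have hWF : ∀ C ⊆ S ∪ NFS E F S, C \ F ⊆ S :=
    fun C hC x ⟨hx, hxF⟩ => (hC hx).resolve_right fun hN => hxF hN.1
  have hAW : A ⊆ S ∪ NFS E F S := hAB ▸ subset_union_left
  have hBW : B ⊆ S ∪ NFS E F S := hAB ▸ subset_union_right
  set A' := A ∪ (S ∪ NFS E F S)ᶜ
  have hcover : A' ∪ B = univ := by
    rw [union_right_comm, ← hAB, union_compl_self]
  have hdisj' : A' ∩ B = ∅ := by
    rw [union_inter_distrib_right, hdisj, empty_union, inter_comm]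
    exact disjoint_iff_inter_eq_empty.mp (disjoint_compl_right_iff_subset.mpr hBW)
  rcases hSC A' B hcover hdisj' (hA.mono (sdiff_subset_sdiff_left subset_union_left)) hB with h | h
  · refine Or.inl (h.induced_NFS hclosed ?_ (hWF B hBW))
    rw [union_inter_distrib_right, compl_inter_self, union_empty]
    exact inter_subset_left
  · have hA'F : A \ F ⊆ A' \ F := sdiff_subset_sdiff_left subset_union_left
    exact Or.inr (Propagates.induced_NFS hclosed inter_subset_left (hWF A hAW)
      fun v hv => h v (hA'F hv))

/-- The subgraph induced on `S ∪ N(F→S)` also satisfies condition SC with parameter `F`. -/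
theorem induced_source_satisfies_SC [Fintype V] (E : V → V → Prop) (f : ℕ) (F S : Set V)
    (hF : F.ncard ≤ f) (hSC : CondSC E f F)
    (hS : IsSourceComponent E F S)
    (hUniq : ∀ S', IsSourceComponent E F S' → S' = S) :
    CondSCOn E f F (S ∪ NFS E F S) :=
  induced_source_satisfies_SC_general E f F S hSC hS
end

section
/- A finite directed graph G satisfies condition NC with parameter F if and only if it satisfies condition SC with parameter F. -/
open Set

variable {V : Type*}

namespace MengerAux
open List

attribute [local simp] List.Chain'

lemma head?_of_prefix {q p : List V} (h : q <+: p) (hq : q ≠ []) : q.head? = p.head? := by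
  obtain ⟨r, rfl⟩ := h
  cases q with
  | nil => exact absurd rfl hq
  | cons a t => simp

lemma getLast?_of_suffix {q p : List V} (h : q <:+ p) (hq : q ≠ []) :
    q.getLast? = p.getLast? := by
  obtain ⟨r, rfl⟩ := h
  rw [List.getLast?_append]
  cases hl : q.getLast? with
  | none => exact absurd (List.getLast?_eq_none_iff.mp hl) hq
  | some a => simp

/-- first hit of K along p -/
lemma first_hit (K : Set V) : ∀ (p : List V), (∃ x ∈ p, x ∈ K) →
    ∃ q, q <+: p ∧ q ≠ [] ∧ (∃ k, q.getLast? = some k ∧ k ∈ K) ∧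
      ∀ z ∈ q.dropLast, z ∉ K := by
  intro p
  induction p with
  | nil => rintro ⟨x, hx, -⟩; simp at hx
  | cons a t ih =>
    intro hx
    by_cases ha : a ∈ K
    · exact ⟨[a], ⟨t, rfl⟩, by simp, ⟨a, by simp, ha⟩, by simp⟩
    · have ht : ∃ x ∈ t, x ∈ K := by
        obtain ⟨x, hx1, hx2⟩ := hx
        rcases List.mem_cons.mp hx1 with rfl | h
        · exact absurd hx2 ha
        · exact ⟨x, h, hx2⟩
      obtain ⟨q, hpre, hne, hk, hdl⟩ := ih ht
      refine ⟨a :: q, ?_, by simp, ?_, ?_⟩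
      · obtain ⟨r, rfl⟩ := hpre; exact ⟨r, rfl⟩
      · obtain ⟨k, hk1, hk2⟩ := hk
        exact ⟨k, by rw [List.getLast?_cons, hk1]; rfl, hk2⟩
      · intro z hz
        rw [List.dropLast_cons_of_ne_nil hne] at hz
        rcases List.mem_cons.mp hz with rfl | h
        · exact ha
        · exact hdl z h

/-- last hit of K along p (as a suffix whose head is the hit) -/
lemma last_hit (K : Set V) : ∀ (p : List V), (∃ x ∈ p, x ∈ K) →
    ∃ q, q <:+ p ∧ q ≠ [] ∧ (∃ k, q.head? = some k ∧ k ∈ K) ∧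
      ∀ z ∈ q.tail, z ∉ K := by
  intro p
  induction p with
  | nil => rintro ⟨x, hx, -⟩; simp at hx
  | cons a t ih =>
    intro hx
    by_cases ht : ∃ x ∈ t, x ∈ K
    · obtain ⟨q, hsuf, hne, hk, htl⟩ := ih ht
      exact ⟨q, hsuf.trans (List.suffix_cons a t), hne, hk, htl⟩
    · have ha : a ∈ K := by
        obtain ⟨x, hx1, hx2⟩ := hx
        rcases List.mem_cons.mp hx1 with rfl | h
        · exact hx2
        · exact absurd ⟨x, h, hx2⟩ ht
      refine ⟨a :: t, List.suffix_refl _, by simp, ⟨a, rfl, ha⟩, ?_⟩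
      intro z hz
      simp only [List.tail_cons] at hz
      exact fun hzK => ht ⟨z, hz, hzK⟩

/-- extract a nodup path from a chain (walk) with same endpoints, vertices included -/
lemma chain_to_path_aux (E : V → V → Prop) : ∀ (n : ℕ) (p : List V), p.length ≤ n → p.Chain' E → p ≠ [] →
    ∃ q : List V, q ≠ [] ∧ q.Nodup ∧ q.Chain' E ∧ q.head? = p.head? ∧
      q.getLast? = p.getLast? ∧ ∀ x ∈ q, x ∈ p := by
  intro n
  induction n with
  | zero => intro p hp _ hne; rw [Nat.le_zero, List.length_eq_zero_iff] at hp; exact absurd hp hne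
  | succ n ih =>
  intro p hlen
  match p with
  | [] => intro _ h; exact absurd rfl h
  | [a] => intro _ _; exact ⟨[a], by simp, by simp, by simp, rfl, rfl, by simp⟩
  | a :: b :: t =>
    intro hc _
    have hc' : (b :: t).Chain' E := hc.tail
    obtain ⟨q, hne, hnd, hqc, hh, hl, hsub⟩ :=
      ih (b :: t) (by simp at hlen ⊢; omega) hc' (by simp)
    by_cases haq : a ∈ q
    · obtain ⟨s, u, rfl⟩ := List.append_of_mem haq
      refine ⟨a :: u, by simp, ?_, ?_, by simp, ?_, ?_⟩
      · exact (hnd.sublist (by simp))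
      · exact hqc.suffix ⟨s, rfl⟩
      · rw [List.getLast?_cons_cons, ← hl, List.getLast?_append, List.getLast?_cons]
        simp
      · intro x hx
        rcases List.mem_cons.mp hx with rfl | h
        · simp
        · have : x ∈ s ++ a :: u := by simp [h]
          exact List.mem_cons_of_mem a (hsub x this)
    · refine ⟨a :: q, by simp, ?_, ?_, by simp, ?_, ?_⟩
      · exact List.nodup_cons.mpr ⟨haq, hnd⟩
      · refine List.isChain_cons.mpr ⟨?_, hqc⟩
        intro y hy
        rw [hh] at hy
        simp only [List.head?_cons, Option.mem_def, Option.some.injEq] at hy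
        subst hy
        exact (List.isChain_cons_cons.mp hc).1
      · rw [List.getLast?_cons, hl]; rfl
      · intro x hx
        rcases List.mem_cons.mp hx with rfl | h
        · simp
        · exact List.mem_cons_of_mem a (hsub x h)

lemma chain_to_path (E : V → V → Prop) (p : List V) (hc : p.Chain' E) (hne : p ≠ []) :
    ∃ q : List V, q ≠ [] ∧ q.Nodup ∧ q.Chain' E ∧ q.head? = p.head? ∧
      q.getLast? = p.getLast? ∧ ∀ x ∈ q, x ∈ p :=
  chain_to_path_aux E p.length p le_rfl hc hne



lemma mem_of_getLast?' {l : List V} {a : V} (h : l.getLast? = some a) : a ∈ l := by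
  have h2 := List.dropLast_append_getLast? (l := l) a (by rw [h]; rfl)
  rw [← h2]; simp

lemma mem_of_head?' {l : List V} {a : V} (h : l.head? = some a) : a ∈ l :=
  List.mem_of_mem_head? (by simp [h])

lemma cons_head_tail {l : List V} {a : V} (h : l.head? = some a) : l = a :: l.tail := by
  cases l with
  | nil => simp at h
  | cons b t => simp at h; subst h; rfl

lemma le_ncard_of_inj {n : ℕ} {T : Set V} (g : Fin n → V) (hinj : Function.Injective g)
    (hsub : ∀ i, g i ∈ T) (hT : T.Finite) : n ≤ T.ncard := by
  have h1 : (Set.range g).ncard = n := by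
    rw [← Nat.card_coe_set_eq, Nat.card_range_of_injective hinj, Nat.card_eq_fintype_card,
      Fintype.card_fin]
  rw [← h1]
  exact Set.ncard_le_ncard (Set.range_subset_iff.mpr hsub) hT

lemma exists_inj_of_le_ncard {n : ℕ} {T : Set V} (h : n ≤ T.ncard) :
    ∃ g : Fin n → V, Function.Injective g ∧ ∀ i, g i ∈ T := by
  obtain ⟨t, hts, htc⟩ := Set.exists_subset_card_eq h
  rcases Nat.eq_zero_or_pos n with rfl | hn
  · exact ⟨fun i => i.elim0, fun i => i.elim0, fun i => i.elim0⟩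
  · have hfin : t.Finite := by
      by_contra hinf
      rw [Set.Infinite.ncard hinf] at htc
      omega
    haveI := hfin.fintype
    have hcard : Fintype.card t = Fintype.card (Fin n) := by
      rw [← Nat.card_eq_fintype_card, Nat.card_coe_set_eq, htc, Fintype.card_fin]
    obtain ⟨eqv⟩ := Fintype.card_eq.mp hcard
    exact ⟨fun i => (eqv.symm i : V), fun i j hij => eqv.symm.injective (Subtype.ext hij),
      fun i => hts (eqv.symm i).2⟩

/-- Paths from A to B. -/
def PathAB (E : V → V → Prop) (A B : Set V) (p : List V) : Prop :=
  DiPath E p ∧ (∃ a ∈ A, p.head? = some a) ∧ (∃ b ∈ B, p.getLast? = some b)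

/-- S meets every A-B path. -/
def SepAB (E : V → V → Prop) (A B S : Set V) : Prop :=
  ∀ p, PathAB E A B p → ∃ x ∈ S, x ∈ p


lemma cross_walk {E : V → V → Prop} {A B S : Set V} (hS : SepAB E A B S) {p q : List V}
    (hpc : p.Chain' E) (hpne : p ≠ []) (hpA : ∃ a ∈ A, p.head? = some a)
    (hpS : ∀ x ∈ p, x ∉ S)
    (hqc : q.Chain' E) (hqne : q ≠ []) (hqB : ∃ b ∈ B, q.getLast? = some b)
    (hqS : ∀ x ∈ q, x ∉ S)
    (hlink : p.getLast? = q.head?) : False := by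
  obtain ⟨qh, qt, rfl⟩ := List.exists_cons_of_ne_nil hqne
  have hwc : (p ++ qt).Chain' E := by
    unfold List.Chain'; rw [List.isChain_append]
    refine ⟨hpc, hqc.tail, ?_⟩
    intro x hx y hy
    rw [hlink] at hx
    simp only [List.head?_cons, Option.mem_def, Option.some.injEq] at hx
    subst hx
    exact (List.isChain_cons.mp hqc).1 y hy
  have hwne : p ++ qt ≠ [] := by simp [hpne]
  obtain ⟨r, hrne, hrnd, hrc, hrh, hrl, hrsub⟩ := chain_to_path E (p ++ qt) hwc hwne
  have hrA : ∃ a ∈ A, r.head? = some a := by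
    obtain ⟨a, ha, hha⟩ := hpA
    refine ⟨a, ha, ?_⟩
    rw [hrh]
    obtain ⟨ph, pt, rfl⟩ := List.exists_cons_of_ne_nil hpne
    simpa using hha
  have hrB : ∃ b ∈ B, r.getLast? = some b := by
    obtain ⟨b, hb, hlb⟩ := hqB
    refine ⟨b, hb, ?_⟩
    rw [hrl, List.getLast?_append]
    cases hqt : qt.getLast? with
    | none =>
      have : qt = [] := List.getLast?_eq_none_iff.mp hqt
      subst this
      simp only [List.getLast?_singleton, Option.some.injEq] at hlb
      rw [Option.none_or, hlink]
      simp [hlb]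
    | some c =>
      have : (qh :: qt).getLast? = some c := by
        rw [List.getLast?_cons, hqt]; rfl
      rw [hlb] at this
      simp [Option.or, this.symm, hqt]
  obtain ⟨x, hxS, hxr⟩ := hS r ⟨⟨hrne, hrnd, hrc⟩, hrA, hrB⟩
  rcases List.mem_append.mp (hrsub x hxr) with h | h
  · exact hpS x h hxS
  · exact hqS x (List.mem_cons_of_mem qh h) hxS

lemma noedge_case {n : ℕ} (E : V → V → Prop) (hE : ∀ x y, E x y → x = y)
    (A B : Set V) (hAB : Set.Finite (A ∩ B)) (h : ∀ S, SepAB E A B S → n ≤ S.ncard) :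
    ∃ P : Fin n → List V, (∀ i, PathAB E A B (P i)) ∧
      ∀ i j, i ≠ j → ∀ x, x ∈ P i → x ∈ P j → False := by
  have key : ∀ p, PathAB E A B p → ∃ a, p = [a] ∧ a ∈ A ∩ B := by
    rintro p ⟨⟨hpne, hpnd, hpc⟩, ⟨a, ha, hha⟩, ⟨b, hb, hlb⟩⟩
    obtain ⟨x, t, rfl⟩ := List.exists_cons_of_ne_nil hpne
    cases t with
    | cons y t' =>
      exfalso
      have hxy : E x y := (List.isChain_cons_cons.mp hpc).1
      have : x = y := hE x y hxy
      subst this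
      simp at hpnd
    | nil =>
      simp only [List.head?_cons, Option.some.injEq] at hha
      simp only [List.getLast?_singleton, Option.some.injEq] at hlb
      subst hha; subst hlb
      exact ⟨x, rfl, ha, hb⟩
  have hsep : SepAB E A B (A ∩ B) := by
    intro p hp
    obtain ⟨a, rfl, ha⟩ := key p hp
    exact ⟨a, ha, by simp⟩
  obtain ⟨g, hginj, hgm⟩ := exists_inj_of_le_ncard (h _ hsep)
  refine ⟨fun i => [g i], ?_, ?_⟩
  · intro i
    exact ⟨⟨by simp, by simp, by simp⟩, ⟨g i, (hgm i).1, by simp⟩, ⟨g i, (hgm i).2, by simp⟩⟩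
  · intro i j hij x hxi hxj
    simp only [List.mem_singleton] at hxi hxj
    exact hij (hginj (hxi.symm.trans hxj))

lemma chain'_sub_or_infix {E : V → V → Prop} {x y : V} :
    ∀ p : List V, p.Chain' E →
      p.Chain' (fun a b => E a b ∧ ¬(a = x ∧ b = y)) ∨ ∃ s t, p = s ++ x :: y :: t := by
  intro p
  induction p with
  | nil => intro _; left; simp
  | cons a t ih =>
    intro hc
    cases t with
    | nil => left; simp
    | cons b t' =>
      obtain ⟨hab, hc'⟩ := List.isChain_cons_cons.mp hc
      rcases ih hc' with h | ⟨s, u, hsu⟩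
      · by_cases hxy2 : a = x ∧ b = y
        · exact Or.inr ⟨[], t', by rw [hxy2.1, hxy2.2]; rfl⟩
        · exact Or.inl (List.isChain_cons_cons.mpr ⟨⟨hab, hxy2⟩, h⟩)
      · exact Or.inr ⟨a :: s, u, by rw [hsu]; rfl⟩

lemma chain'_E'_of_last {E : V → V → Prop} {x y : V} :
    ∀ q : List V, q.Chain' E → x ∉ q.dropLast →
      q.Chain' (fun a b => E a b ∧ ¬(a = x ∧ b = y)) := by
  intro q
  induction q with
  | nil => intro _ _; simp
  | cons a t ih =>
    intro hc hx
    cases t with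
    | nil => simp
    | cons b t' =>
      obtain ⟨hab, hc'⟩ := List.isChain_cons_cons.mp hc
      have hdl : (a :: b :: t').dropLast = a :: (b :: t').dropLast := rfl
      rw [hdl, List.mem_cons] at hx
      push_neg at hx
      refine List.isChain_cons_cons.mpr ⟨⟨hab, fun hh => hx.1 hh.1.symm⟩, ih hc' hx.2⟩

lemma chain'_E'_of_head {E : V → V → Prop} {x y : V} :
    ∀ q : List V, q.Chain' E → y ∉ q.tail →
      q.Chain' (fun a b => E a b ∧ ¬(a = x ∧ b = y)) := by
  intro q
  induction q with
  | nil => intro _ _; simp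
  | cons a t ih =>
    intro hc hy
    cases t with
    | nil => simp
    | cons b t' =>
      obtain ⟨hab, hc'⟩ := List.isChain_cons_cons.mp hc
      simp only [List.tail_cons, List.mem_cons] at hy
      push_neg at hy
      refine List.isChain_cons_cons.mpr ⟨⟨hab, fun hh => hy.1 hh.2.symm⟩, ?_⟩
      exact ih hc' (by simpa using fun h => hy.2 h)

theorem mengerAB [Fintype V] (n : ℕ) : ∀ (m : ℕ) (E : V → V → Prop),
    {z : V × V | E z.1 z.2}.ncard ≤ m → ∀ A B : Set V,
    (∀ S : Set V, SepAB E A B S → n ≤ S.ncard) →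
    ∃ P : Fin n → List V, (∀ i, PathAB E A B (P i)) ∧
      ∀ i j, i ≠ j → ∀ x, x ∈ P i → x ∈ P j → False := by
  intro m
  induction m with
  | zero =>
    intro E hc A B h
    refine noedge_case E ?_ A B (Set.toFinite _) h
    intro x y hxy
    exfalso
    have h0 : {z : V × V | E z.1 z.2}.ncard = 0 := Nat.le_zero.mp hc
    have hemp : {z : V × V | E z.1 z.2} = ∅ := by
      rwa [Set.ncard_eq_zero (Set.toFinite _)] at h0
    exact absurd (show (x, y) ∈ {z : V × V | E z.1 z.2} from hxy) (by rw [hemp]; simp)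
  | succ m ih =>
    intro E hc A B h
    by_cases hE : ∀ x y : V, E x y → x = y
    · exact noedge_case E hE A B (Set.toFinite _) h
    push_neg at hE
    obtain ⟨x, y, hExy, hxy⟩ := hE
    classical
    set E' : V → V → Prop := fun a b => E a b ∧ ¬(a = x ∧ b = y) with hE'def
    have hE'le : ∀ a b, E' a b → E a b := fun a b hab => hab.1
    have hc' : {z : V × V | E' z.1 z.2}.ncard ≤ m := by
      have hsub : {z : V × V | E' z.1 z.2} ⊆ {z : V × V | E z.1 z.2} \ {(x, y)} := by
        rintro ⟨a, c⟩ ⟨h1, h2⟩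
        refine ⟨h1, ?_⟩
        simp only [Set.mem_singleton_iff, Prod.mk.injEq]
        exact fun hh => h2 ⟨hh.1, hh.2⟩
      have h1 : ({z : V × V | E z.1 z.2} \ {(x, y)}).ncard < {z : V × V | E z.1 z.2}.ncard :=
        Set.ncard_diff_singleton_lt_of_mem hExy (Set.toFinite _)
      have h2 := Set.ncard_le_ncard hsub (Set.toFinite _)
      omega
    by_cases hsep' : ∀ S, SepAB E' A B S → n ≤ S.ncard
    · obtain ⟨P, h1, h2⟩ := ih E' hc' A B hsep'
      refine ⟨P, fun i => ⟨⟨(h1 i).1.1, (h1 i).1.2.1, (h1 i).1.2.2.imp hE'le⟩,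
        (h1 i).2.1, (h1 i).2.2⟩, h2⟩
    push_neg at hsep'
    obtain ⟨S, hSsep, hSlt⟩ := hsep'
    have hSfin : S.Finite := Set.toFinite _
    have hSepx : SepAB E A B (insert x S) := by
      rintro p ⟨⟨hpne, hpnd, hpc⟩, hpA, hpB⟩
      rcases chain'_sub_or_infix (x := x) (y := y) p hpc with hE'p | ⟨s, t, rfl⟩
      · obtain ⟨z, hz1, hz2⟩ := hSsep p ⟨⟨hpne, hpnd, hE'p⟩, hpA, hpB⟩
        exact ⟨z, Set.mem_insert_of_mem x hz1, hz2⟩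
      · exact ⟨x, Set.mem_insert x S, by simp⟩
    have hSepy : SepAB E A B (insert y S) := by
      rintro p ⟨⟨hpne, hpnd, hpc⟩, hpA, hpB⟩
      rcases chain'_sub_or_infix (x := x) (y := y) p hpc with hE'p | ⟨s, t, rfl⟩
      · obtain ⟨z, hz1, hz2⟩ := hSsep p ⟨⟨hpne, hpnd, hE'p⟩, hpA, hpB⟩
        exact ⟨z, Set.mem_insert_of_mem y hz1, hz2⟩
      · exact ⟨y, Set.mem_insert y S, by simp⟩
    have hxS : x ∉ S := by
      intro hxmem
      have h1 := h _ hSepx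
      rw [Set.insert_eq_of_mem hxmem] at h1
      omega
    have hyS : y ∉ S := by
      intro hymem
      have h1 := h _ hSepy
      rw [Set.insert_eq_of_mem hymem] at h1
      omega
    have hSxcard : (insert x S).ncard = n := by
      have h1 := h _ hSepx
      have h2 := Set.ncard_insert_le x S
      rw [Set.ncard_insert_of_notMem hxS hSfin]
      omega
    have hsepx_strong : ∀ T, SepAB E' A (insert x S) T → SepAB E A B T := by
      rintro T hT p ⟨⟨hpne, hpnd, hpc⟩, hpA, hpB⟩
      rcases chain'_sub_or_infix (x := x) (y := y) p hpc with hE'p | ⟨s, t, rfl⟩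
      · obtain ⟨z, hzS, hzp⟩ := hSsep p ⟨⟨hpne, hpnd, hE'p⟩, hpA, hpB⟩
        obtain ⟨q, hqpre, hqne, ⟨k, hkl, hkK⟩, hqdl⟩ :=
          first_hit (insert x S) p ⟨z, hzp, Set.mem_insert_of_mem x hzS⟩
        obtain ⟨w, hwT, hwq⟩ := hT q ⟨⟨hqne, hpnd.sublist hqpre.sublist, hE'p.prefix hqpre⟩,
          (by obtain ⟨a, ha, hha⟩ := hpA
              exact ⟨a, ha, by rw [head?_of_prefix hqpre hqne, hha]⟩),
          ⟨k, hkK, hkl⟩⟩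
        exact ⟨w, hwT, hqpre.subset hwq⟩
      · have hqpre : (s ++ [x]) <+: s ++ x :: y :: t := ⟨y :: t, by simp⟩
        have hqne : s ++ [x] ≠ [] := by simp
        have hxns : x ∉ s := by
          intro hxs
          rw [List.nodup_append] at hpnd
          exact hpnd.2.2 x hxs x (by simp) rfl
        have hqchain : (s ++ [x]).Chain' E' := by
          apply chain'_E'_of_last (E := E) (y := y)
          · exact hpc.prefix hqpre
          · simpa [List.dropLast_concat] using hxns
        obtain ⟨w, hwT, hwq⟩ := hT (s ++ [x]) ⟨⟨hqne, hpnd.sublist hqpre.sublist, hqchain⟩,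
          (by obtain ⟨a, ha, hha⟩ := hpA
              exact ⟨a, ha, by rw [head?_of_prefix hqpre hqne, hha]⟩),
          ⟨x, Set.mem_insert x S, by simp [List.getLast?_append]⟩⟩
        exact ⟨w, hwT, hqpre.subset hwq⟩
    have hsepy_strong : ∀ T, SepAB E' (insert y S) B T → SepAB E A B T := by
      rintro T hT p ⟨⟨hpne, hpnd, hpc⟩, hpA, hpB⟩
      rcases chain'_sub_or_infix (x := x) (y := y) p hpc with hE'p | ⟨s, t, rfl⟩
      · obtain ⟨z, hzS, hzp⟩ := hSsep p ⟨⟨hpne, hpnd, hE'p⟩, hpA, hpB⟩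
        obtain ⟨q, hqsuf, hqne, ⟨k, hkh, hkK⟩, hqtl⟩ :=
          last_hit (insert y S) p ⟨z, hzp, Set.mem_insert_of_mem y hzS⟩
        obtain ⟨w, hwT, hwq⟩ := hT q ⟨⟨hqne, hpnd.sublist hqsuf.sublist, hE'p.suffix hqsuf⟩,
          ⟨k, hkK, hkh⟩,
          (by obtain ⟨bb, hbb, hlb⟩ := hpB
              exact ⟨bb, hbb, by rw [getLast?_of_suffix hqsuf hqne, hlb]⟩)⟩
        exact ⟨w, hwT, hqsuf.subset hwq⟩
      · have hqsuf : (y :: t) <:+ s ++ x :: y :: t := ⟨s ++ [x], by simp⟩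
        have hynt : y ∉ t := by
          have hnd2 : (y :: t).Nodup := hpnd.sublist hqsuf.sublist
          exact (List.nodup_cons.mp hnd2).1
        have hqchain : (y :: t).Chain' E' := by
          apply chain'_E'_of_head (E := E) (x := x)
          · exact hpc.suffix hqsuf
          · simpa using hynt
        obtain ⟨w, hwT, hwq⟩ := hT (y :: t) ⟨⟨by simp, hpnd.sublist hqsuf.sublist, hqchain⟩,
          ⟨y, Set.mem_insert y S, rfl⟩,
          (by obtain ⟨bb, hbb, hlb⟩ := hpB
              exact ⟨bb, hbb, by rw [getLast?_of_suffix hqsuf (by simp), hlb]⟩)⟩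
        exact ⟨w, hwT, hqsuf.subset hwq⟩
    obtain ⟨P, hPpath, hPdisj⟩ := ih E' hc' A (insert x S) (fun T hT => h T (hsepx_strong T hT))
    obtain ⟨Q, hQpath, hQdisj⟩ := ih E' hc' (insert y S) B (fun T hT => h T (hsepy_strong T hT))
    -- truncate P at first hit of insert x S
    have hPfh : ∀ i, ∃ q, q <+: P i ∧ q ≠ [] ∧
        (∃ k, q.getLast? = some k ∧ k ∈ insert x S) ∧ ∀ z ∈ q.dropLast, z ∉ insert x S := by
      intro i
      obtain ⟨bb, hbb, hlb⟩ := (hPpath i).2.2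
      exact first_hit _ _ ⟨bb, mem_of_getLast?' hlb, hbb⟩
    choose P' hP'pre hP'ne hP'k hP'dl using hPfh
    choose e he hek using hP'k
    have hP'path : ∀ i, PathAB E' A (insert x S) (P' i) := by
      intro i
      obtain ⟨⟨hne, hnd, hch⟩, hA, _⟩ := hPpath i
      exact ⟨⟨hP'ne i, hnd.sublist (hP'pre i).sublist, hch.prefix (hP'pre i)⟩,
        (by obtain ⟨a, ha, hha⟩ := hA
            exact ⟨a, ha, by rw [head?_of_prefix (hP'pre i) (hP'ne i), hha]⟩),
        ⟨e i, hek i, he i⟩⟩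
    have hP'disj : ∀ i j, i ≠ j → ∀ z, z ∈ P' i → z ∈ P' j → False :=
      fun i j hij z hzi hzj =>
        hPdisj i j hij z ((hP'pre i).subset hzi) ((hP'pre j).subset hzj)
    have heP' : ∀ i, e i ∈ P' i := fun i => mem_of_getLast?' (he i)
    have heinj : Function.Injective e := by
      intro i j hij
      by_contra hne
      exact hP'disj i j hne (e i) (heP' i) (hij ▸ heP' j)
    have hesurj : ∀ k ∈ insert x S, ∃ i, e i = k := by
      have hr : Set.range e = insert x S := by
        refine Set.eq_of_subset_of_ncard_le ?_ ?_ (Set.toFinite _)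
        · rintro _ ⟨i, rfl⟩
          exact hek i
        · rw [hSxcard]
          exact le_ncard_of_inj e heinj (fun i => ⟨i, rfl⟩) (Set.toFinite _)
      intro k hk
      rw [← hr] at hk
      exact hk
    have hP'decomp : ∀ i, (P' i).dropLast ++ [e i] = P' i := by
      intro i
      exact List.dropLast_append_getLast? (e i) (by rw [he i]; rfl)
    have hP'last : ∀ i z, z ∈ P' i → z ≠ e i → z ∈ (P' i).dropLast := by
      intro i z hz hne
      rw [← hP'decomp i] at hz
      rcases List.mem_append.mp hz with h1 | h1
      · exact h1
      · simp only [List.mem_singleton] at h1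
        exact absurd h1 hne
    -- truncate Q at last hit of insert y S
    have hQfh : ∀ j, ∃ q, q <:+ Q j ∧ q ≠ [] ∧
        (∃ k, q.head? = some k ∧ k ∈ insert y S) ∧ ∀ z ∈ q.tail, z ∉ insert y S := by
      intro j
      obtain ⟨a, ha, hha⟩ := (hQpath j).2.1
      exact last_hit _ _ ⟨a, mem_of_head?' hha, ha⟩
    choose Q' hQ'suf hQ'ne hQ'k hQ'tl using hQfh
    choose b hb hbk using hQ'k
    have hQ'path : ∀ j, PathAB E' (insert y S) B (Q' j) := by
      intro j
      obtain ⟨⟨hne, hnd, hch⟩, _, hB⟩ := hQpath j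
      exact ⟨⟨hQ'ne j, hnd.sublist (hQ'suf j).sublist, hch.suffix (hQ'suf j)⟩,
        ⟨b j, hbk j, hb j⟩,
        (by obtain ⟨bb, hbb, hlb⟩ := hB
            exact ⟨bb, hbb, by rw [getLast?_of_suffix (hQ'suf j) (hQ'ne j), hlb]⟩)⟩
    have hQ'disj : ∀ i j, i ≠ j → ∀ z, z ∈ Q' i → z ∈ Q' j → False :=
      fun i j hij z hzi hzj =>
        hQdisj i j hij z ((hQ'suf i).subset hzi) ((hQ'suf j).subset hzj)
    have hbQ' : ∀ j, b j ∈ Q' j := fun j => mem_of_head?' (hb j)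
    have hbinj : Function.Injective b := by
      intro i j hij
      by_contra hne
      exact hQ'disj i j hne (b i) (hbQ' i) (hij ▸ hbQ' j)
    have hSycard : (insert y S).ncard = n := by
      have h1 := h _ hSepy
      have h2 := Set.ncard_insert_le y S
      rw [Set.ncard_insert_of_notMem hyS hSfin]
      have h3 := hSlt
      omega
    have hbsurj : ∀ k ∈ insert y S, ∃ j, b j = k := by
      have hr : Set.range b = insert y S := by
        refine Set.eq_of_subset_of_ncard_le ?_ ?_ (Set.toFinite _)
        · rintro _ ⟨j, rfl⟩
          exact hbk j
        · rw [hSycard]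
          exact le_ncard_of_inj b hbinj (fun j => ⟨j, rfl⟩) (Set.toFinite _)
      intro k hk
      rw [← hr] at hk
      exact hk
    have hQ'decomp : ∀ j, Q' j = b j :: (Q' j).tail := fun j => cons_head_tail (hb j)
    have hQ'head : ∀ j z, z ∈ Q' j → z ≠ b j → z ∈ (Q' j).tail := by
      intro j z hz hne
      rw [hQ'decomp j] at hz
      rcases List.mem_cons.mp hz with h1 | h1
      · exact absurd h1 hne
      · exact h1
    -- x does not appear in the tail of any Q'
    have hxQ : ∀ j, x ∉ (Q' j).tail := by
      intro j hxt
      obtain ⟨i0, hi0⟩ := hesurj x (Set.mem_insert x S)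
      obtain ⟨s, t, hst⟩ := List.append_of_mem hxt
      have hq2suf : (x :: t) <:+ Q' j :=
        (show (x :: t) <:+ (Q' j).tail from ⟨s, hst.symm⟩).trans (List.tail_suffix _)
      apply cross_walk hSsep (p := P' i0) (q := x :: t)
      · exact (hP'path i0).1.2.2
      · exact hP'ne i0
      · exact (hP'path i0).2.1
      · intro z hz hzS
        by_cases hze : z = e i0
        · rw [hze, hi0] at hzS
          exact hxS hzS
        · exact hP'dl i0 z (hP'last i0 z hz hze) (Set.mem_insert_of_mem x hzS)
      · exact (hQ'path j).1.2.2.suffix hq2suf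
      · simp
      · obtain ⟨bb, hbb, hlb⟩ := (hQ'path j).2.2
        exact ⟨bb, hbb, by rw [getLast?_of_suffix hq2suf (by simp), hlb]⟩
      · intro z hz hzS
        have hz' : z ∈ (Q' j).tail :=
          (show (x :: t) <:+ (Q' j).tail from ⟨s, hst.symm⟩).subset hz
        exact hQ'tl j z hz' (Set.mem_insert_of_mem y hzS)
      · rw [he i0, hi0]
        rfl
    -- y does not appear in the dropLast of any P'
    have hyP : ∀ i, y ∉ (P' i).dropLast := by
      intro i hyd
      obtain ⟨j0, hj0⟩ := hbsurj y (Set.mem_insert y S)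
      obtain ⟨s, t, hst⟩ := List.append_of_mem hyd
      have hq1pre : (s ++ [y]) <+: P' i :=
        (show (s ++ [y]) <+: (P' i).dropLast from ⟨t, by rw [hst]; simp⟩).trans
          (List.dropLast_prefix _)
      apply cross_walk hSsep (p := s ++ [y]) (q := Q' j0)
      · exact (hP'path i).1.2.2.prefix hq1pre
      · simp
      · obtain ⟨a, ha, hha⟩ := (hP'path i).2.1
        exact ⟨a, ha, by rw [head?_of_prefix hq1pre (by simp), hha]⟩
      · intro z hz hzS
        have hz' : z ∈ (P' i).dropLast := by
          rcases List.mem_append.mp hz with h1 | h1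
          · rw [hst]
            exact List.mem_append_left _ h1
          · simp only [List.mem_singleton] at h1
            subst h1
            rw [hst]
            exact List.mem_append_right _ (by simp)
        exact hP'dl i z hz' (Set.mem_insert_of_mem x hzS)
      · exact (hQ'path j0).1.2.2
      · exact hQ'ne j0
      · exact (hQ'path j0).2.2
      · intro z hz hzS
        by_cases hzb : z = b j0
        · rw [hzb, hj0] at hzS
          exact hyS hzS
        · exact hQ'tl j0 z (hQ'head j0 z hz hzb) (Set.mem_insert_of_mem y hzS)
      · rw [hb j0, hj0]
        simp [List.getLast?_append]
    -- the key crossing lemma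
    have key : ∀ i j z, z ∈ P' i → z ∈ Q' j → z = e i ∧ z = b j ∧ z ∈ S := by
      intro i j z hzi hzj
      by_cases hze : z = e i
      · by_cases hzb : z = b j
        · refine ⟨hze, hzb, ?_⟩
          have h1 : z ∈ insert x S := by rw [hze]; exact hek i
          have h2 : z ∈ insert y S := by rw [hzb]; exact hbk j
          rcases Set.mem_insert_iff.mp h1 with rfl | hzS
          · rcases Set.mem_insert_iff.mp h2 with h3 | h3
            · exact absurd h3 hxy
            · exact absurd h3 hxS
          · exact hzS
        · exfalso
          have hzt : z ∈ (Q' j).tail := hQ'head j z hzj hzb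
          have h1 : z ∈ insert x S := by rw [hze]; exact hek i
          have hzx : z = x := by
            rcases Set.mem_insert_iff.mp h1 with h1' | h1'
            · exact h1'
            · exact absurd (Set.mem_insert_of_mem y h1') (fun hm => hQ'tl j z hzt hm)
          exact hxQ j (hzx ▸ hzt)
      · by_cases hzb : z = b j
        · exfalso
          have hzd : z ∈ (P' i).dropLast := hP'last i z hzi hze
          have h2 : z ∈ insert y S := by rw [hzb]; exact hbk j
          have hzy : z = y := by
            rcases Set.mem_insert_iff.mp h2 with h2' | h2'
            · exact h2'
            · exact absurd (Set.mem_insert_of_mem x h2') (hP'dl i z hzd)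
          exact hyP i (hzy ▸ hzd)
        · exfalso
          have hzd : z ∈ (P' i).dropLast := hP'last i z hzi hze
          have hzt : z ∈ (Q' j).tail := hQ'head j z hzj hzb
          obtain ⟨s1, t1, hst1⟩ := List.append_of_mem hzd
          obtain ⟨s2, t2, hst2⟩ := List.append_of_mem hzt
          have hq1pre : (s1 ++ [z]) <+: P' i :=
            (show (s1 ++ [z]) <+: (P' i).dropLast from ⟨t1, by rw [hst1]; simp⟩).trans
              (List.dropLast_prefix _)
          have hq2suf : (z :: t2) <:+ Q' j :=
            (show (z :: t2) <:+ (Q' j).tail from ⟨s2, hst2.symm⟩).trans (List.tail_suffix _)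
          apply cross_walk hSsep (p := s1 ++ [z]) (q := z :: t2)
          · exact (hP'path i).1.2.2.prefix hq1pre
          · simp
          · obtain ⟨a, ha, hha⟩ := (hP'path i).2.1
            exact ⟨a, ha, by rw [head?_of_prefix hq1pre (by simp), hha]⟩
          · intro w hw hwS
            have hw' : w ∈ (P' i).dropLast := by
              rcases List.mem_append.mp hw with h1 | h1
              · rw [hst1]
                exact List.mem_append_left _ h1
              · simp only [List.mem_singleton] at h1
                subst h1
                exact hzd
            exact hP'dl i w hw' (Set.mem_insert_of_mem x hwS)
          · exact (hQ'path j).1.2.2.suffix hq2suf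
          · simp
          · obtain ⟨bb, hbb, hlb⟩ := (hQ'path j).2.2
            exact ⟨bb, hbb, by rw [getLast?_of_suffix hq2suf (by simp), hlb]⟩
          · intro w hw hwS
            have hw' : w ∈ (Q' j).tail := by
              rcases List.mem_cons.mp hw with h1 | h1
              · subst h1
                exact hzt
              · exact (show (z :: t2) <:+ (Q' j).tail from ⟨s2, hst2.symm⟩).subset
                  (List.mem_cons_of_mem z h1)
            exact hQ'tl j w hw' (Set.mem_insert_of_mem y hwS)
          · simp [List.getLast?_append]
    -- matching σ
    have htgt : ∀ i, (if e i = x then y else e i) ∈ insert y S := by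
      intro i
      by_cases hix : e i = x
      · simp [hix]
      · simp only [if_neg hix]
        rcases Set.mem_insert_iff.mp (hek i) with h1 | h1
        · exact absurd h1 hix
        · exact Set.mem_insert_of_mem y h1
    have hσex : ∀ i, ∃ j, b j = (if e i = x then y else e i) := fun i => hbsurj _ (htgt i)
    choose σ hσb using hσex
    have hσinj : Function.Injective σ := by
      intro i j hij
      have h1 : (if e i = x then y else e i) = (if e j = x then y else e j) := by
        rw [← hσb i, ← hσb j, hij]
      apply heinj
      by_cases hix : e i = x <;> by_cases hjx : e j = x
      · rw [hix, hjx]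
      · exfalso
        rw [if_pos hix, if_neg hjx] at h1
        rcases Set.mem_insert_iff.mp (hek j) with h2 | h2
        · exact hjx h2
        · rw [← h1] at h2
          exact hyS h2
      · exfalso
        rw [if_neg hix, if_pos hjx] at h1
        rcases Set.mem_insert_iff.mp (hek i) with h2 | h2
        · exact hix h2
        · rw [h1] at h2
          exact hyS h2
      · rwa [if_neg hix, if_neg hjx] at h1
    set T : Fin n → List V := fun i => if e i = x then Q' (σ i) else (Q' (σ i)).tail with hTdef
    have hTQ : ∀ i z, z ∈ T i → z ∈ Q' (σ i) := by
      intro i z hz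
      simp only [hTdef] at hz
      by_cases hix : e i = x
      · rwa [if_pos hix] at hz
      · rw [if_neg hix] at hz
        exact (List.tail_suffix _).subset hz
    have hPT : ∀ i j z, z ∈ P' i → z ∈ T j → False := by
      intro i j z hzi hzj
      obtain ⟨hze, hzb, hzS⟩ := key i (σ j) z hzi (hTQ j z hzj)
      by_cases hjx : e j = x
      · simp only [hTdef] at hzj
        rw [if_pos hjx] at hzj
        have : b (σ j) = y := by rw [hσb j, if_pos hjx]
        rw [this] at hzb
        rw [hzb] at hzS
        exact hyS hzS
      · simp only [hTdef] at hzj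
        rw [if_neg hjx] at hzj
        have hnd : (Q' (σ j)).Nodup := (hQ'path (σ j)).1.2.1
        rw [hQ'decomp (σ j)] at hnd
        exact (List.nodup_cons.mp hnd).1 (hzb ▸ hzj)
    refine ⟨fun i => P' i ++ T i, ?_, ?_⟩
    · intro i
      have hchainT : (T i).Chain' E := by
        simp only [hTdef]
        by_cases hix : e i = x
        · rw [if_pos hix]
          exact (hQ'path (σ i)).1.2.2.imp hE'le
        · rw [if_neg hix]
          exact ((hQ'path (σ i)).1.2.2.imp hE'le).tail
      have hndT : (T i).Nodup := by
        simp only [hTdef]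
        by_cases hix : e i = x
        · rw [if_pos hix]
          exact (hQ'path (σ i)).1.2.1
        · rw [if_neg hix]
          exact (hQ'path (σ i)).1.2.1.sublist (List.tail_sublist _)
      refine ⟨⟨by simp [hP'ne i], ?_, ?_⟩, ?_, ?_⟩
      · rw [List.nodup_append]
        exact ⟨(hP'path i).1.2.1, hndT, fun a ha b' hb' hab => hPT i i a ha (hab ▸ hb')⟩
      · unfold List.Chain'; rw [List.isChain_append]
        refine ⟨(hP'path i).1.2.2.imp hE'le, hchainT, ?_⟩
        intro zl hzl zh hzh
        rw [he i] at hzl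
        simp only [Option.mem_def, Option.some.injEq] at hzl
        subst hzl
        simp only [hTdef] at hzh
        by_cases hix : e i = x
        · rw [if_pos hix] at hzh
          rw [hb (σ i)] at hzh
          simp only [Option.mem_def, Option.some.injEq] at hzh
          subst hzh
          rw [hix]
          have : b (σ i) = y := by rw [hσb i, if_pos hix]
          rw [this]
          exact hExy
        · rw [if_neg hix] at hzh
          have hch := (hQ'path (σ i)).1.2.2
          rw [hQ'decomp (σ i)] at hch
          have := (List.isChain_cons.mp hch).1 zh hzh
          have hbe : b (σ i) = e i := by rw [hσb i, if_neg hix]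
          rw [hbe] at this
          exact hE'le _ _ this
      · obtain ⟨a, ha, hha⟩ := (hP'path i).2.1
        refine ⟨a, ha, ?_⟩
        rw [← head?_of_prefix (⟨T i, rfl⟩ : P' i <+: P' i ++ T i) (hP'ne i), hha]
      · show ∃ bb ∈ B, (P' i ++ T i).getLast? = some bb
        by_cases hTne : T i = []
        · rw [hTne, List.append_nil]
          have hix : ¬ (e i = x) := by
            intro hix
            simp only [hTdef] at hTne
            rw [if_pos hix] at hTne
            exact hQ'ne (σ i) hTne
          have htl : (Q' (σ i)).tail = [] := by
            simp only [hTdef] at hTne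
            rwa [if_neg hix] at hTne
          obtain ⟨bb, hbb, hlb⟩ := (hQ'path (σ i)).2.2
          have hQsing : Q' (σ i) = [b (σ i)] := by
            rw [hQ'decomp (σ i), htl]
          rw [hQsing] at hlb
          simp only [List.getLast?_singleton, Option.some.injEq] at hlb
          have hbe : b (σ i) = e i := by rw [hσb i, if_neg hix]
          refine ⟨bb, hbb, ?_⟩
          rw [he i, ← hbe, hlb]
        · obtain ⟨bb, hbb, hlb⟩ := (hQ'path (σ i)).2.2
          refine ⟨bb, hbb, ?_⟩
          have hTlast : (T i).getLast? = some bb := by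
            simp only [hTdef]
            by_cases hix : e i = x
            · rwa [if_pos hix]
            · rw [if_neg hix]
              simp only [hTdef] at hTne
              rw [if_neg hix] at hTne
              rw [getLast?_of_suffix (List.tail_suffix (Q' (σ i))) hTne, hlb]
          rw [List.getLast?_append, hTlast]
          rfl
    · intro i j hij z hzi hzj
      rcases List.mem_append.mp hzi with h1 | h1 <;> rcases List.mem_append.mp hzj with h2 | h2
      · exact hP'disj i j hij z h1 h2
      · exact hPT i j z h1 h2
      · exact hPT j i z h2 h1
      · exact hQ'disj (σ i) (σ j) (fun hσij => hij (hσinj hσij)) z (hTQ i z h1) (hTQ j z h2)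

lemma chain'_and_mem {R : V → V → Prop} {Pa Pc : V → Prop} :
    ∀ l : List V, l.Chain' R → (∀ a ∈ l.dropLast, Pa a) → (∀ c ∈ l.tail, Pc c) →
      l.Chain' (fun a c => R a c ∧ Pa a ∧ Pc c) := by
  intro l
  induction l with
  | nil => intro _ _ _; simp
  | cons a t ih =>
    intro hc ha hcc
    cases t with
    | nil => simp
    | cons c t' =>
      obtain ⟨hac, hc'⟩ := List.isChain_cons_cons.mp hc
      refine List.isChain_cons_cons.mpr ⟨⟨hac, ?_, ?_⟩, ?_⟩
      · exact ha a (by rw [List.dropLast_cons_of_ne_nil (by simp)]; simp)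
      · exact hcc c (by simp)
      · refine ih hc' ?_ ?_
        · intro z hz
          refine ha z ?_
          rw [List.dropLast_cons_of_ne_nil (by simp)]
          exact List.mem_cons_of_mem a hz
        · intro z hz
          exact hcc z (List.mem_cons_of_mem c hz)

lemma chain'_tail_prop {R : V → Prop → Prop} : True := trivial

lemma chain'_tail_pred {R : V → V → Prop} {P : V → Prop} (hR : ∀ a c, R a c → P c) :
    ∀ l : List V, l.Chain' R → ∀ z ∈ l.tail, P z := by
  intro l
  induction l with
  | nil => intro _ z hz; simp at hz
  | cons a t ih =>
    intro hc z hz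
    simp only [List.tail_cons] at hz
    cases t with
    | nil => simp at hz
    | cons c t' =>
      obtain ⟨hac, hc'⟩ := List.isChain_cons_cons.mp hc
      rcases List.mem_cons.mp hz with rfl | hz'
      · exact hR a z hac
      · exact ih hc' z hz'

theorem menger_cut [Fintype V] (E : V → V → Prop) (F A : Set V) (v : V) (n : ℕ)
    (h : ∀ S : Set V, v ∉ S →
      (∀ p, PathFromTo E A v p → Excludes F p → ∃ x ∈ S, x ∈ p) → n ≤ S.ncard) :
    DisjPaths E F A v n := by
  classical
  by_cases hvA : v ∈ A
  · refine ⟨fun _ => [v], fun i => ⟨⟨⟨by simp, by simp, by simp⟩, ⟨v, hvA, rfl⟩, rfl⟩, ?_⟩,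
      fun i j _ x hxi _ => by simpa using hxi⟩
    intro z hz
    simp at hz
  set E₂ : V → V → Prop := fun a c => E a c ∧ a ≠ v ∧ (c ∉ F ∧ c ≠ v) with hE2
  set B₂ : Set V := {u | E u v ∧ u ≠ v} with hB2
  have hAB : ∀ Sp : Set V, SepAB E₂ A B₂ Sp → n ≤ Sp.ncard := by
    intro Sp hsep
    have hS' : ∀ p, PathFromTo E A v p → Excludes F p → ∃ z ∈ Sp \ {v}, z ∈ p := by
      rintro p ⟨⟨hpne, hpnd, hpc⟩, hpA, hpl⟩ hex
      have hdec : p.dropLast ++ [v] = p := List.dropLast_append_getLast? v (by rw [hpl]; rfl)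
      have hp0ne : p.dropLast ≠ [] := by
        intro h0
        rw [h0, List.nil_append] at hdec
        obtain ⟨a, ha, hha⟩ := hpA
        rw [← hdec] at hha
        simp only [List.head?_cons, Option.some.injEq] at hha
        exact hvA (hha ▸ ha)
      have hvnp0 : v ∉ p.dropLast := by
        have hnd2 : (p.dropLast ++ [v]).Nodup := by rw [hdec]; exact hpnd
        rw [List.nodup_append] at hnd2
        intro hv
        exact hnd2.2.2 v hv v (by simp) rfl
      have hch0 : p.dropLast.Chain' E := hpc.prefix (List.dropLast_prefix p)
      have hjun : ∀ zl ∈ p.dropLast.getLast?, E zl v := by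
        intro zl hzl
        have := List.isChain_append.mp (by rw [hdec]; exact hpc)
        exact this.2.2 zl hzl v rfl
      have htaileq : p.dropLast.tail = p.tail.dropLast := by
        obtain ⟨a, t, hat⟩ := List.exists_cons_of_ne_nil hpne
        subst hat
        cases t with
        | nil => simp
        | cons c t' => simp
      have hch2 : p.dropLast.Chain' E₂ := by
        have := chain'_and_mem (R := E) (Pa := fun a => a ≠ v)
          (Pc := fun c => c ∉ F ∧ c ≠ v) p.dropLast hch0
          (fun a ha => fun hav => hvnp0 (hav ▸ (List.dropLast_prefix _).subset ha))
          ?_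
        · exact this.imp (fun a c hac => ⟨hac.1, hac.2.1, hac.2.2⟩)
        · intro c hc
          constructor
          · apply hex
            rw [← htaileq]
            exact hc
          · intro hcv
            exact hvnp0 (hcv ▸ (List.tail_suffix _).subset hc)
      have hu : ∃ u ∈ B₂, p.dropLast.getLast? = some u := by
        have hglast := List.getLast?_eq_getLast_of_ne_nil hp0ne
        refine ⟨p.dropLast.getLast hp0ne, ⟨hjun _ hglast, ?_⟩, hglast⟩
        intro hv
        exact hvnp0 (hv ▸ List.getLast_mem hp0ne)
      obtain ⟨z, hzS, hzp⟩ := hsep p.dropLast ⟨⟨hp0ne, hpnd.sublist (List.dropLast_sublist p), hch2⟩,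
        (by obtain ⟨a, ha, hha⟩ := hpA
            exact ⟨a, ha, by rw [head?_of_prefix (List.dropLast_prefix p) hp0ne, hha]⟩), hu⟩
      refine ⟨z, ⟨hzS, ?_⟩, (List.dropLast_prefix p).subset hzp⟩
      intro hzv
      simp only [Set.mem_singleton_iff] at hzv
      exact hvnp0 (hzv ▸ hzp)
    have h1 := h (Sp \ {v}) (by simp) hS'
    exact h1.trans (Set.ncard_le_ncard Set.diff_subset (Set.toFinite _))
  obtain ⟨P, hPpath, hPdisj⟩ :=
    mengerAB n {z : V × V | E₂ z.1 z.2}.ncard E₂ le_rfl A B₂ hAB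
  have hvP : ∀ i, v ∉ P i := by
    intro i hv
    obtain ⟨⟨hne, hnd, hch⟩, ⟨a, ha, hha⟩, ⟨u, hu, hlu⟩⟩ := hPpath i
    rw [cons_head_tail hha] at hv
    rcases List.mem_cons.mp hv with h1 | h1
    · exact hvA (h1 ▸ ha)
    · have : ∀ z ∈ (P i).tail, z ≠ v :=
        chain'_tail_pred (fun a c hac => hac.2.2.2) (P i) hch
      have h2 := this v (by rw [cons_head_tail hha]; exact h1)
      exact h2 rfl
  refine ⟨fun i => P i ++ [v], ?_, ?_⟩
  · intro i
    obtain ⟨⟨hne, hnd, hch⟩, ⟨a, ha, hha⟩, ⟨u, hu, hlu⟩⟩ := hPpath i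
    refine ⟨⟨⟨by simp, ?_, ?_⟩, ⟨a, ha, ?_⟩, ?_⟩, ?_⟩
    · rw [List.nodup_append]
      exact ⟨hnd, by simp, fun z hz z' hz' hzz => hvP i (by rw [List.mem_singleton] at hz'; rw [← hz', ← hzz]; exact hz)⟩
    · unfold List.Chain'; rw [List.isChain_append]
      refine ⟨hch.imp (fun a c hac => hac.1), by simp, ?_⟩
      intro zl hzl zh hzh
      simp only [List.head?_cons, Option.mem_def, Option.some.injEq] at hzh
      subst zh
      rw [hlu] at hzl
      simp only [Option.mem_def, Option.some.injEq] at hzl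
      subst zl
      exact hu.1
    · rw [← head?_of_prefix (⟨[v], rfl⟩ : P i <+: P i ++ [v]) hne, hha]
    · simp [List.getLast?_append]
    · intro z hz
      have htl : (P i ++ [v]).tail.dropLast = (P i).tail := by
        rw [cons_head_tail hha]
        simp
      rw [htl] at hz
      exact chain'_tail_pred (fun a c hac => hac.2.2.1) (P i) hch z hz
  · intro i j hij z hzi hzj
    rcases List.mem_append.mp hzi with h1 | h1
    · rcases List.mem_append.mp hzj with h2 | h2
      · exact absurd (hPdisj i j hij z h1 h2) not_false
      · simpa using h2
    · simpa using h1

lemma menger_contra [Fintype V] (E : V → V → Prop) (F A : Set V) (v : V) (f : ℕ)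
    (hn : ¬ DisjPaths E F A v (f + 1)) :
    ∃ S : Set V, v ∉ S ∧ S.ncard ≤ f ∧
      ∀ p, PathFromTo E A v p → Excludes F p → ∃ x ∈ S, x ∈ p := by
  by_contra hc
  push_neg at hc
  refine hn (menger_cut E F A v (f + 1) ?_)
  intro S hvS hcut
  by_contra hlt
  push_neg at hlt
  obtain ⟨p, hp1, hp2, hx⟩ := hc S hvS (by omega)
  obtain ⟨z, hz1, hz2⟩ := hcut p hp1 hp2
  exact hx z hz1 hz2

lemma mem_internal {p : List V} {z a w : V} (hnd : p.Nodup) (hh : p.head? = some a)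
    (hl : p.getLast? = some w) (hz : z ∈ p) (hza : z ≠ a) (hzw : z ≠ w) :
    z ∈ p.tail.dropLast := by
  rw [cons_head_tail hh] at hz
  rcases List.mem_cons.mp hz with rfl | hzt
  · exact absurd rfl hza
  · have htne : p.tail ≠ [] := by
      intro h0
      rw [h0] at hzt
      simp at hzt
    have hlt : p.tail.getLast? = some w := by
      rw [getLast?_of_suffix (List.tail_suffix p) htne, hl]
    have hdec : p.tail.dropLast ++ [w] = p.tail :=
      List.dropLast_append_getLast? w (by rw [hlt]; rfl)
    rw [← hdec] at hzt
    rcases List.mem_append.mp hzt with h1 | h1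
    · exact h1
    · simp only [List.mem_singleton] at h1
      exact absurd h1 hzw

lemma count_lemma [Fintype V] (E : V → V → Prop) (f : ℕ) (F X Y : Set V)
    (hXY : ∀ z ∈ X, z ∉ Y) (w : V) (hwY : w ∈ Y) (hwF : w ∉ F)
    (hprop : DisjPaths E F X w (f + 1)) :
    f < (inNbr E Yᶜ (Y \ F)).ncard := by
  obtain ⟨P, hPp, hPd⟩ := hprop
  have hstep : ∀ i, ∃ xx, xx ∈ inNbr E Yᶜ (Y \ F) ∧ xx ∈ P i ∧ xx ∉ Y := by
    intro i
    obtain ⟨⟨⟨hne, hnd, hch⟩, ⟨a, haX, hha⟩, hlast⟩, hexc⟩ := hPp i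
    obtain ⟨q, hqpre, hqne, ⟨k, hkl, hkY⟩, hqdl⟩ :=
      first_hit Y (P i) ⟨w, mem_of_getLast?' hlast, hwY⟩
    have hdne : q.dropLast ≠ [] := by
      intro h0
      have hdec : q.dropLast ++ [k] = q := List.dropLast_append_getLast? k (by rw [hkl]; rfl)
      rw [h0, List.nil_append] at hdec
      have : q.head? = some k := by rw [← hdec]; rfl
      rw [head?_of_prefix hqpre hqne, hha] at this
      simp only [Option.some.injEq] at this
      exact hXY a haX (this ▸ hkY)
    set xx := q.dropLast.getLast hdne with hxxdef
    have hxxmem : xx ∈ q.dropLast := List.getLast_mem hdne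
    have hxxY : xx ∉ Y := hqdl xx hxxmem
    have hdec : q.dropLast ++ [k] = q := List.dropLast_append_getLast? k (by rw [hkl]; rfl)
    have hedge : E xx k := by
      have hc : (q.dropLast ++ [k]).Chain' E := by
        rw [hdec]
        exact hch.prefix hqpre
      exact (List.isChain_append.mp hc).2.2 xx (List.getLast?_eq_getLast_of_ne_nil hdne) k rfl
    have hkF : k ∉ F := by
      by_cases hkw : k = w
      · exact hkw ▸ hwF
      · have hka : k ≠ a := by
          intro h0
          exact hXY a haX (h0 ▸ hkY)
        exact hexc k (mem_internal hnd hha hlast (hqpre.subset (mem_of_getLast?' hkl)) hka hkw)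
    refine ⟨xx, ⟨hxxY, k, ⟨hkY, hkF⟩, hedge⟩, hqpre.subset ((List.dropLast_prefix q).subset hxxmem), hxxY⟩
  choose g hg1 hg2 hg3 using hstep
  have hginj : Function.Injective g := by
    intro i j hij
    by_contra hneq
    have hgw := hPd i j hneq (g i) (hg2 i) (hij ▸ hg2 j)
    exact hg3 i (hgw ▸ hwY)
  have := le_ncard_of_inj g hginj hg1 (Set.toFinite _)
  omega

lemma sc_to_nc [Fintype V] (E : V → V → Prop) (f : ℕ) (F : Set V)
    (hSC : CondSC E f F) : CondNC E f F := by
  intro L C R hun hLC hLR hCR hLne hRne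
  have hmem : ∀ z : V, z ∈ L ∨ z ∈ C ∨ z ∈ R := by
    intro z
    have : z ∈ L ∪ C ∪ R := by rw [hun]; trivial
    rcases this with h | h
    · rcases h with h | h
      · exact Or.inl h
      · exact Or.inr (Or.inl h)
    · exact Or.inr (Or.inr h)
  have hLcomp : R ∪ C = Lᶜ := by
    ext z
    constructor
    · rintro (h | h) hzL
      · exact (Set.eq_empty_iff_forall_notMem.mp hLR z) ⟨hzL, h⟩
      · exact (Set.eq_empty_iff_forall_notMem.mp hLC z) ⟨hzL, h⟩
    · intro hz
      rcases hmem z with h | h | h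
      · exact absurd h hz
      · exact Or.inr h
      · exact Or.inl h
  have hRcomp : L ∪ C = Rᶜ := by
    ext z
    constructor
    · rintro (h | h) hzR
      · exact (Set.eq_empty_iff_forall_notMem.mp hLR z) ⟨h, hzR⟩
      · exact (Set.eq_empty_iff_forall_notMem.mp hCR z) ⟨h, hzR⟩
    · intro hz
      rcases hmem z with h | h | h
      · exact Or.inl h
      · exact Or.inr h
      · exact absurd h hz
  have hAB1 : (R ∪ C) ∪ L = Set.univ := by
    rw [hLcomp]
    exact Set.compl_union_self L
  have hAB2 : (R ∪ C) ∩ L = ∅ := by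
    rw [hLcomp]
    ext z
    simp only [Set.mem_inter_iff, Set.mem_compl_iff, Set.mem_empty_iff_false, iff_false]
    rintro ⟨h1, h2⟩
    exact h1 h2
  have h1ne : ((R ∪ C) \ F).Nonempty := by
    obtain ⟨z, hz1, hz2⟩ := hRne
    exact ⟨z, Or.inl hz1, hz2⟩
  rcases hSC (R ∪ C) L hAB1 hAB2 h1ne hLne with hp | hp
  · left
    obtain ⟨w, hwL, hwF⟩ := hLne
    have := count_lemma E f F (R ∪ C) L
      (fun z hz hzL => (Set.eq_empty_iff_forall_notMem.mp hAB2 z) ⟨hz, hzL⟩)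
      w hwL hwF (hp w ⟨hwL, hwF⟩)
    rwa [← hLcomp] at this
  · right
    obtain ⟨w, hwR, hwF⟩ := hRne
    have := count_lemma E f F L R
      (fun z hz hzR => (Set.eq_empty_iff_forall_notMem.mp hLR z) ⟨hz, hzR⟩)
      w hwR hwF (hp w ⟨Or.inl hwR, hwF⟩)
    rwa [← hRcomp] at this

/-- Vertices reaching `v` by a path avoiding `S0` entirely and `F` after the head. -/
def RSet (E : V → V → Prop) (F S0 : Set V) (v : V) : Set V :=
  {z | ∃ p, DiPath E p ∧ p.head? = some z ∧ p.getLast? = some v ∧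
    (∀ x ∈ p, x ∉ S0) ∧ (∀ x ∈ p.tail, x ∉ F)}

lemma self_mem_RSet {E : V → V → Prop} {F S0 : Set V} {v : V} (hv : v ∉ S0) :
    v ∈ RSet E F S0 v := by
  refine ⟨[v], ⟨by simp, by simp, by simp⟩, rfl, rfl, ?_, by simp⟩
  intro x hx
  simp only [List.mem_singleton] at hx
  subst hx
  exact hv

lemma RSet_closed {E : V → V → Prop} {F S0 : Set V} {v wv z : V} (hwS : wv ∉ S0)
    (hz : z ∈ RSet E F S0 v) (hzF : z ∉ F) (hE : E wv z) : wv ∈ RSet E F S0 v := by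
  obtain ⟨p, ⟨hne, hnd, hch⟩, hh, hl, hS, hF⟩ := hz
  by_cases hwp : wv ∈ p
  · obtain ⟨s, t, hst⟩ := List.append_of_mem hwp
    have hsuf : (wv :: t) <:+ p := ⟨s, hst.symm⟩
    refine ⟨wv :: t, ⟨by simp, hnd.sublist hsuf.sublist, hch.suffix hsuf⟩, rfl,
      by rw [getLast?_of_suffix hsuf (by simp), hl], fun x hx => hS x (hsuf.subset hx), ?_⟩
    intro x hx
    simp only [List.tail_cons] at hx
    apply hF
    cases s with
    | nil =>
      rw [hst]
      simpa using hx
    | cons a s' =>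
      rw [hst]
      simp only [List.cons_append, List.tail_cons]
      exact List.mem_append_right _ (List.mem_cons_of_mem wv hx)
  · have hpgl : p.getLast? = (wv :: p).getLast? :=
      getLast?_of_suffix (show p <:+ wv :: p from ⟨[wv], rfl⟩) hne
    refine ⟨wv :: p, ⟨by simp, List.nodup_cons.mpr ⟨hwp, hnd⟩,
      List.isChain_cons.mpr ⟨?_, hch⟩⟩, rfl, by rw [← hpgl, hl], ?_, ?_⟩
    · intro yh hyh
      rw [hh] at hyh
      simp only [Option.mem_def, Option.some.injEq] at hyh
      subst hyh
      exact hE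
    · intro x hx
      rcases List.mem_cons.mp hx with rfl | hx'
      · exact hwS
      · exact hS x hx'
    · intro x hx
      simp only [List.tail_cons] at hx
      rw [cons_head_tail hh] at hx
      rcases List.mem_cons.mp hx with rfl | hx'
      · exact hzF
      · exact hF x hx'

lemma nc_to_sc [Fintype V] (E : V → V → Prop) (f : ℕ) (F : Set V)
    (hNC : CondNC E f F) : CondSC E f F := by
  intro A B hun hint hAne hBne
  have hmemAB : ∀ z : V, z ∈ A ∨ z ∈ B := fun z =>
    (show z ∈ A ∪ B by rw [hun]; trivial)
  have hdisj : ∀ z, z ∈ A → z ∈ B → False := fun z h1 h2 =>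
    (Set.eq_empty_iff_forall_notMem.mp hint z) ⟨h1, h2⟩
  by_cases hA : Propagates E f F A (B \ F)
  · exact Or.inl hA
  right
  have hA' : ∃ v ∈ B \ F, ¬ DisjPaths E F A v (f + 1) := by
    by_contra hcc
    push_neg at hcc
    exact hA fun v hv => hcc v hv
  obtain ⟨v, hvBF, hv⟩ := hA'
  obtain ⟨S, hvS, hScard, hScut⟩ := menger_contra E F A v f hv
  intro u huAF
  by_contra hu
  obtain ⟨T, huT, hTcard, hTcut⟩ := menger_contra E F B u f hu
  set R : Set V := RSet E F S v with hRdef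
  set L : Set V := RSet E F T u with hLdef
  have hvR : v ∈ R := self_mem_RSet hvS
  have huL : u ∈ L := self_mem_RSet huT
  have hRnA : ∀ z ∈ R, z ∉ A := by
    rintro z ⟨p, hdp, hh, hl, hS0, hF0⟩ hzA
    obtain ⟨xx, hx1, hx2⟩ := hScut p ⟨hdp, ⟨z, hzA, hh⟩, hl⟩
      (fun x hx => hF0 x ((List.dropLast_prefix p.tail).subset hx))
    exact hS0 xx hx2 hx1
  have hLnB : ∀ z ∈ L, z ∉ B := by
    rintro z ⟨p, hdp, hh, hl, hS0, hF0⟩ hzB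
    obtain ⟨xx, hx1, hx2⟩ := hTcut p ⟨hdp, ⟨z, hzB, hh⟩, hl⟩
      (fun x hx => hF0 x ((List.dropLast_prefix p.tail).subset hx))
    exact hS0 xx hx2 hx1
  have hLR : ∀ z, z ∈ L → z ∈ R → False := fun z h1 h2 => by
    rcases hmemAB z with h | h
    · exact hRnA z h2 h
    · exact hLnB z h1 h
  set C : Set V := Set.univ \ (L ∪ R) with hCdef
  have hpart : L ∪ C ∪ R = Set.univ := by
    ext z
    simp only [hCdef, Set.mem_union, Set.mem_diff, Set.mem_univ, true_and, iff_true]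
    tauto
  have hd1 : L ∩ C = ∅ := by
    refine Set.eq_empty_iff_forall_notMem.mpr fun z hz => ?_
    simp only [hCdef, Set.mem_inter_iff, Set.mem_diff, Set.mem_univ, true_and,
      Set.mem_union] at hz
    exact hz.2 (Or.inl hz.1)
  have hd2 : L ∩ R = ∅ := by
    refine Set.eq_empty_iff_forall_notMem.mpr fun z hz => ?_
    exact hLR z hz.1 hz.2
  have hd3 : C ∩ R = ∅ := by
    refine Set.eq_empty_iff_forall_notMem.mpr fun z hz => ?_
    simp only [hCdef, Set.mem_inter_iff, Set.mem_diff, Set.mem_univ, true_and,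
      Set.mem_union] at hz
    exact hz.1 (Or.inr hz.2)
  have hLFne : (L \ F).Nonempty := ⟨u, huL, huAF.2⟩
  have hRFne : (R \ F).Nonempty := ⟨v, hvR, hvBF.2⟩
  have hkey1 : inNbr E (R ∪ C) (L \ F) ⊆ T := by
    rintro wv ⟨hw1, z, hzLF, hEz⟩
    by_contra hwT
    have hwL : wv ∈ L := RSet_closed hwT hzLF.1 hzLF.2 hEz
    rcases hw1 with h | h
    · exact hLR wv hwL h
    · simp only [hCdef, Set.mem_diff, Set.mem_univ, true_and, Set.mem_union] at h
      exact h (Or.inl hwL)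
  have hkey2 : inNbr E (L ∪ C) (R \ F) ⊆ S := by
    rintro wv ⟨hw1, z, hzRF, hEz⟩
    by_contra hwS
    have hwR : wv ∈ R := RSet_closed hwS hzRF.1 hzRF.2 hEz
    rcases hw1 with h | h
    · exact hLR wv h hwR
    · simp only [hCdef, Set.mem_diff, Set.mem_univ, true_and, Set.mem_union] at h
      exact h (Or.inr hwR)
  rcases hNC L C R hpart hd1 hd2 hd3 hLFne hRFne with hbig | hbig
  · have := (Set.ncard_le_ncard hkey1 (Set.toFinite _)).trans hTcard
    omega
  · have := (Set.ncard_le_ncard hkey2 (Set.toFinite _)).trans hScard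
    omega

end MengerAux

/-- Condition NC with parameter `F` holds iff condition SC with parameter `F` holds. -/
theorem condNC_iff_condSC [Fintype V] (E : V → V → Prop) (f : ℕ) (F : Set V)
    (hF : F.ncard ≤ f) :
    CondNC E f F ↔ CondSC E f F :=
  ⟨MengerAux.nc_to_sc E f F, MengerAux.sc_to_nc E f F⟩
end

section
/- Let G be a finite directed graph satisfying condition NC with parameter F. For any partition (A,B) of V with A−F and B−F nonempty, if the in-neighborhood of A−F contained in B has size at most f, then for every vertex v ∈ B−F there exist f+1 paths from A to v, pairwise sharing only v, with no internal vertex in F. -/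
open Set

variable {V : Type*}

namespace MGR

open List


lemma getLast?_cons_ne {a : V} {l : List V} (h : l ≠ []) : (a :: l).getLast? = l.getLast? := by
  cases l with
  | nil => exact absurd rfl h
  | cons b t => exact List.getLast?_cons_cons

/-- every element of the tail of a chain is a target of the relation, from a source in the list -/
lemma tail_target {D : V → V → Prop} : ∀ {p : List V}, p.Chain' D → ∀ x ∈ p.tail, ∃ u ∈ p, D u x := by
  intro p
  induction p with
  | nil => intro _ x hx; simp at hx
  | cons a t ih =>
    intro hc x hx
    cases t with
    | nil => simp at hx
    | cons b t' =>
      rw [List.Chain', List.isChain_cons_cons] at hc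
      rcases List.mem_cons.1 hx with hx | hx
      · exact ⟨a, by simp, hx ▸ hc.1⟩
      · obtain ⟨u, hu, hD⟩ := ih hc.2 x hx
        exact ⟨u, List.mem_cons_of_mem _ hu, hD⟩

lemma last_of_mem_not_dropLast {p : List V} {s : V} (hne : p ≠ []) (hs : s ∈ p)
    (h : s ∉ p.dropLast) : p.getLast? = some s := by
  have h1 : p = p.dropLast ++ [p.getLast hne] := (List.dropLast_append_getLast hne).symm
  have : s ∈ p.dropLast ++ [p.getLast hne] := h1 ▸ hs
  rcases List.mem_append.1 this with h2 | h2
  · exact absurd h2 h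
  · simp at h2
    subst h2
    exact List.getLast?_eq_getLast hne

lemma head_of_mem_not_tail {p : List V} {s : V} (hne : p ≠ []) (hs : s ∈ p)
    (h : s ∉ p.tail) : p.head? = some s := by
  cases p with
  | nil => exact absurd rfl hne
  | cons a t =>
    rcases List.mem_cons.1 hs with h2 | h2
    · simp [h2]
    · exact absurd h2 h

lemma tail_subset_tail {p q : List V} (h : q <:+ p) : ∀ x ∈ q.tail, x ∈ p.tail := by
  obtain ⟨r, rfl⟩ := h
  cases r with
  | nil => simp
  | cons b t =>
    intro x hx
    simp only [List.cons_append, List.tail_cons]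
    exact List.mem_append.2 (Or.inr (List.mem_of_mem_tail hx))

lemma last_eq_of_prefix {p q : List V} {s : V} (h : q <+: p) (hn : p.Nodup)
    (hl : p.getLast? = some s) (hs : s ∈ q) : q.getLast? = some s := by
  obtain ⟨r, rfl⟩ := h
  cases r with
  | nil => simpa using hl
  | cons b t =>
    rw [List.getLast?_append_of_ne_nil _ (by simp)] at hl
    have hsr : s ∈ b :: t := mem_of_mem_getLast? hl
    have := (List.nodup_append.1 hn).2.2
    exact absurd hsr (by intro hc; exact this s hs s hc rfl)

lemma head_eq_of_suffix {p q : List V} {s : V} (h : q <:+ p) (hn : p.Nodup)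
    (hl : p.head? = some s) (hs : s ∈ q) : q.head? = some s := by
  obtain ⟨r, rfl⟩ := h
  cases r with
  | nil => simpa using hl
  | cons b t =>
    rw [List.head?_append_of_ne_nil _ (by simp)] at hl
    have hsr : s ∈ b :: t := mem_of_mem_head? hl
    have := (List.nodup_append.1 hn).2.2
    exact absurd hs (by intro hc; exact this s hsr s hc rfl)


open Classical in
/-- prefix ending at the first hit of S -/
lemma exists_prefix_first_hit (S : Set V) :
    ∀ {p : List V}, p ≠ [] → (∃ x ∈ p, x ∈ S) →
    ∃ q, q <+: p ∧ q ≠ [] ∧ q.head? = p.head? ∧ (∃ s ∈ S, q.getLast? = some s) ∧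
      ∀ u ∈ q.dropLast, u ∉ S := by
  intro p
  induction p with
  | nil => intro h; exact absurd rfl h
  | cons a t ih =>
    intro _ hhit
    by_cases ha : a ∈ S
    · exact ⟨[a], ⟨t, rfl⟩, by simp, by simp, ⟨a, ha, by simp⟩, by simp⟩
    · have hht : ∃ x ∈ t, x ∈ S := by
        obtain ⟨x, hx, hxS⟩ := hhit
        rcases List.mem_cons.1 hx with rfl | hx
        · exact absurd hxS ha
        · exact ⟨x, hx, hxS⟩
      have htne : t ≠ [] := by
        rintro rfl; obtain ⟨x, hx, _⟩ := hht; simp at hx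
      obtain ⟨q', hpre, hne, hh, hl, hd⟩ := ih htne hht
      refine ⟨a :: q', ?_, by simp, by simp, ?_, ?_⟩
      · obtain ⟨r, hr⟩ := hpre
        exact ⟨r, by rw [List.cons_append, hr]⟩
      · obtain ⟨s, hs, hq⟩ := hl
        exact ⟨s, hs, by rw [getLast?_cons_ne hne, hq]⟩
      · intro u hu
        rw [dropLast_cons_of_ne_nil hne] at hu
        rcases List.mem_cons.1 hu with rfl | hu
        · exact ha
        · exact hd u hu

open Classical in
/-- suffix starting at the last hit of S -/
lemma exists_suffix_last_hit (S : Set V) :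
    ∀ {p : List V}, p ≠ [] → (∃ x ∈ p, x ∈ S) →
    ∃ q, q <:+ p ∧ q ≠ [] ∧ q.getLast? = p.getLast? ∧ (∃ s ∈ S, q.head? = some s) ∧
      ∀ u ∈ q.tail, u ∉ S := by
  intro p
  induction p with
  | nil => intro h; exact absurd rfl h
  | cons a t ih =>
    intro _ hhit
    by_cases hht : ∃ x ∈ t, x ∈ S
    · have htne : t ≠ [] := by
        rintro rfl; obtain ⟨x, hx, _⟩ := hht; simp at hx
      obtain ⟨q', hsuf, hne, hl, hh, hd⟩ := ih htne hht
      refine ⟨q', hsuf.trans (List.suffix_cons a t), hne, ?_, hh, hd⟩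
      rw [hl, getLast?_cons_ne htne]
    · push_neg at hht
      have ha : a ∈ S := by
        obtain ⟨x, hx, hxS⟩ := hhit
        rcases List.mem_cons.1 hx with rfl | hx
        · exact hxS
        · exact absurd hxS (hht x hx)
      exact ⟨a :: t, List.suffix_refl _, by simp, rfl, ⟨a, ha, by simp⟩, fun u hu => hht u hu⟩

/-- extract a nodup path from a walk -/
lemma exists_path_of_walk {D : V → V → Prop} :
    ∀ (n : ℕ) (l : List V), l.length ≤ n → l ≠ [] → l.Chain' D →
    ∃ p : List V, p ≠ [] ∧ p.Nodup ∧ p.Chain' D ∧ p.head? = l.head? ∧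
      p.getLast? = l.getLast? ∧ ∀ x ∈ p, x ∈ l := by
  intro n
  induction n with
  | zero => intro l hl hne _; cases l with
    | nil => exact absurd rfl hne
    | cons a t => simp at hl
  | succ n ih =>
    intro l hl hne hc
    cases l with
    | nil => exact absurd rfl hne
    | cons a t =>
      by_cases ha : a ∈ t
      · obtain ⟨t₁, t₂, rfl⟩ := List.append_of_mem ha
        have hsuf : (a :: t₂) <:+ (a :: (t₁ ++ a :: t₂)) := ⟨a :: t₁, by simp⟩
        have hc' : (a :: t₂).Chain' D := hc.suffix hsuf
        have hlen : (a :: t₂).length ≤ n := by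
          simp only [List.length_cons, List.length_append] at hl ⊢
          omega
        obtain ⟨p, h1, h2, h3, h4, h5, h6⟩ := ih _ hlen (by simp) hc'
        refine ⟨p, h1, h2, h3, by simpa using h4, ?_, fun x hx => hsuf.subset (h6 x hx)⟩
        rw [h5]
        have heq : a :: (t₁ ++ a :: t₂) = (a :: t₁) ++ (a :: t₂) := by simp
        rw [heq, List.getLast?_append_of_ne_nil _ (by simp)]
      · cases t with
        | nil => exact ⟨[a], by simp, by simp, List.isChain_singleton a, rfl, rfl, by simp⟩
        | cons b t' =>
          have hc2 : (b :: t').Chain' D := (List.isChain_cons_cons.1 hc).2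
          obtain ⟨p, h1, h2, h3, h4, h5, h6⟩ := ih (b :: t') (by simp at hl ⊢; omega) (by simp) hc2
          have hanp : a ∉ p := fun hc' => ha (h6 a hc')
          refine ⟨a :: p, by simp, List.nodup_cons.2 ⟨hanp, h2⟩, ?_, by simp, ?_, ?_⟩
          · rw [List.Chain', List.isChain_cons]
            refine ⟨fun y hy => ?_, h3⟩
            have hyb : y = b := by
              cases p with
              | nil => exact absurd rfl h1
              | cons c t'' =>
                simp only [List.head?_cons, Option.mem_def, Option.some.injEq] at hy h4
                rw [← hy, h4]
            exact hyb ▸ (List.isChain_cons_cons.1 hc).1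
          · rw [getLast?_cons_ne h1]
            exact h5.trans (getLast?_cons_ne (by simp)).symm
          · intro x hx
            rcases List.mem_cons.1 hx with rfl | hx
            · simp
            · exact List.mem_cons_of_mem _ (h6 x hx)


/-- a chain avoiding using the specific edge (x,y) is a chain in the edge-deleted graph -/
lemma chain'_del {D : V → V → Prop} {x y : V} :
    ∀ {p : List V}, p.Chain' D → (x ∉ p.dropLast ∨ y ∉ p.tail) →
      p.Chain' (fun a b => D a b ∧ ¬(a = x ∧ b = y)) := by
  intro p
  induction p with
  | nil => intro _ _; exact List.isChain_nil
  | cons a t ih =>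
    intro hc havoid
    cases t with
    | nil => exact List.isChain_singleton a
    | cons b t' =>
      rw [List.Chain', List.isChain_cons_cons] at hc
      rw [List.Chain', List.isChain_cons_cons]
      have hd1 : x ∈ (a :: b :: t').dropLast → x = a ∨ x ∈ (b :: t').dropLast := by
        intro hx
        rw [dropLast_cons_of_ne_nil (by simp)] at hx
        rcases List.mem_cons.1 hx with rfl | hx
        · exact Or.inl rfl
        · exact Or.inr hx
      constructor
      · refine ⟨hc.1, ?_⟩
        rintro ⟨rfl, rfl⟩
        rcases havoid with h | h
        · exact h (by rw [dropLast_cons_of_ne_nil (by simp)]; simp)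
        · exact h (by simp)
      · refine ih hc.2 ?_
        rcases havoid with h | h
        · left
          intro hx
          exact h (by rw [dropLast_cons_of_ne_nil (by simp)]
                      exact List.mem_cons_of_mem _ hx)
        · right
          intro hy
          exact h (List.mem_cons_of_mem _ (by exact hy))

/-- glue two paths sharing exactly the junction vertex -/
lemma glue_shared {D : V → V → Prop} {p q : List V} {s : V}
    (hp : p ≠ [] ∧ p.Nodup ∧ p.Chain' D) (hq : q ≠ [] ∧ q.Nodup ∧ q.Chain' D)
    (hpl : p.getLast? = some s) (hqh : q.head? = some s)
    (hint : ∀ x ∈ p, x ∈ q → x = s) :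
    (p ++ q.tail) ≠ [] ∧ (p ++ q.tail).Nodup ∧ (p ++ q.tail).Chain' D ∧
    (p ++ q.tail).head? = p.head? ∧ (p ++ q.tail).getLast? = q.getLast? ∧
    (∀ x ∈ p ++ q.tail, x ∈ p ∨ x ∈ q) := by
  obtain ⟨hpne, hpn, hpc⟩ := hp
  obtain ⟨hqne, hqn, hqc⟩ := hq
  obtain ⟨qh, qt, rfl⟩ : ∃ qh qt, q = qh :: qt := by
    cases q with
    | nil => exact absurd rfl hqne
    | cons qh qt => exact ⟨qh, qt, rfl⟩
  have hqh' : qh = s := by simpa using hqh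
  have hsnt : s ∉ qt := hqh' ▸ (List.nodup_cons.1 hqn).1
  have hdisj : ∀ x ∈ p, x ∉ qt := by
    intro x hx hxq
    have := hint x hx (List.mem_cons_of_mem _ hxq)
    subst this
    exact hsnt hxq
  simp only [List.tail_cons]
  refine ⟨fun h => hpne (List.append_eq_nil_iff.1 h).1, ?_, ?_,
    head?_append_of_ne_nil _ hpne, ?_, ?_⟩
  · exact List.nodup_append.2 ⟨hpn, (List.nodup_cons.1 hqn).2, fun x hx y hy hxy => hdisj x hx (hxy ▸ hy)⟩
  · rw [List.Chain', List.isChain_append]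
    refine ⟨hpc, (List.isChain_cons.1 hqc).2, ?_⟩
    intro xx hxx yy hyy
    have hxs : xx = s := by rw [hpl] at hxx; exact (by simpa using hxx : s = xx).symm
    subst hxs
    subst hqh'
    exact (List.isChain_cons.1 hqc).1 yy hyy
  · cases qt with
    | nil =>
      simp only [List.append_nil]
      rw [hpl, hqh']
      simp
    | cons c t =>
      rw [List.getLast?_append_of_ne_nil _ (show (c :: t) ≠ [] by simp)]
      exact (getLast?_cons_ne (show (c :: t) ≠ [] by simp)).symm
  · intro x hx
    rcases List.mem_append.1 hx with hx | hx
    · exact Or.inl hx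
    · exact Or.inr (List.mem_cons_of_mem _ hx)

/-- glue two disjoint paths along an edge -/
lemma glue_edge {D : V → V → Prop} {p q : List V} {x y : V}
    (hp : p ≠ [] ∧ p.Nodup ∧ p.Chain' D) (hq : q ≠ [] ∧ q.Nodup ∧ q.Chain' D)
    (hpl : p.getLast? = some x) (hqh : q.head? = some y) (hxy : D x y)
    (hdisj : ∀ u ∈ p, u ∉ q) :
    (p ++ q) ≠ [] ∧ (p ++ q).Nodup ∧ (p ++ q).Chain' D ∧
    (p ++ q).head? = p.head? ∧ (p ++ q).getLast? = q.getLast? := by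
  obtain ⟨hpne, hpn, hpc⟩ := hp
  obtain ⟨hqne, hqn, hqc⟩ := hq
  refine ⟨by simp [hpne], List.nodup_append.2 ⟨hpn, hqn, fun u hu w hw huw => hdisj u hu (huw ▸ hw)⟩, ?_,
    head?_append_of_ne_nil _ hpne, List.getLast?_append_of_ne_nil _ hqne⟩
  rw [List.Chain', List.isChain_append]
  refine ⟨hpc, hqc, ?_⟩
  intro xx hxx yy hyy
  rw [hpl] at hxx
  rw [hqh] at hyy
  simp at hxx hyy
  subst hxx; subst hyy
  exact hxy


lemma head_cons_eq {p : List V} {s : V} (h : p.head? = some s) : p = s :: p.tail := by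
  cases p with
  | nil => simp at h
  | cons a t => simp at h; rw [h]; rfl

lemma exists_inj_of_ncard [Fintype V] {s : Set V} {k : ℕ} (hk : k ≤ s.ncard) :
    ∃ g : Fin k → V, Function.Injective g ∧ ∀ i, g i ∈ s := by
  obtain ⟨t, hts, htc⟩ := Set.exists_subset_card_eq hk
  have htf : t.Finite := Set.toFinite t
  have hcard : htf.toFinset.card = k := by
    rw [← Set.ncard_eq_toFinset_card t htf, htc]
  let eqv := htf.toFinset.equivFin
  refine ⟨fun i => (eqv.symm (Fin.cast hcard.symm i) : V), ?_, ?_⟩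
  · intro i j h
    have h2 := eqv.symm.injective (Subtype.val_injective h)
    have h3 := congrArg Fin.val h2
    exact Fin.ext (by simpa using h3)
  · intro i
    exact hts (htf.mem_toFinset.1 (eqv.symm (Fin.cast hcard.symm i)).2)

lemma surj_of_inj_ncard [Fintype V] {s : Set V} {k : ℕ} (g : Fin k → V)
    (hinj : Function.Injective g) (hmem : ∀ i, g i ∈ s) (hcard : s.ncard ≤ k) :
    ∀ x ∈ s, ∃ i, g i = x := by
  have hrange : Set.range g ⊆ s := by rintro _ ⟨i, rfl⟩; exact hmem i
  have hr : (Set.range g).ncard = k := by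
    rw [← Set.image_univ, Set.ncard_image_of_injective _ hinj, Set.ncard_univ,
      Nat.card_eq_fintype_card, Fintype.card_fin]
  have : Set.range g = s := Set.eq_of_subset_of_ncard_le hrange (by rw [hr]; exact hcard)
      (Set.toFinite s)
  intro x hx
  rw [← this] at hx
  exact hx

lemma getLast?_append_tail {q₁ q₂ : List V} {u : V}
    (h1 : q₁.getLast? = some u) (h2 : q₂.head? = some u) :
    (q₁ ++ q₂.tail).getLast? = q₂.getLast? := by
  cases q₂ with
  | nil => simp at h2
  | cons a t =>
    simp only [List.head?_cons, Option.some.injEq] at h2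
    cases t with
    | nil => simpa [h2] using h1
    | cons c t' =>
      rw [List.tail_cons, List.getLast?_append_of_ne_nil _ (by simp)]
      exact (getLast?_cons_ne (by simp)).symm

/-- A separator: every A→Z path meets S. -/
def Sep (D : V → V → Prop) (A Z S : Set V) : Prop :=
  ∀ p : List V, (p ≠ [] ∧ p.Nodup ∧ p.Chain' D) → (∃ a ∈ A, p.head? = some a) →
    (∃ z ∈ Z, p.getLast? = some z) → ∃ x ∈ p, x ∈ S

theorem menger [Fintype V] (k : ℕ) :
    ∀ (n : ℕ) (D : V → V → Prop) (A Z : Set V),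
      {e : V × V | D e.1 e.2 ∧ e.1 ≠ e.2}.ncard ≤ n →
      (∀ S : Set V, Sep D A Z S → k ≤ S.ncard) →
      ∃ P : Fin k → List V,
        (∀ i, (P i ≠ [] ∧ (P i).Nodup ∧ (P i).Chain' D) ∧ (∃ a ∈ A, (P i).head? = some a) ∧
          (∃ z ∈ Z, (P i).getLast? = some z)) ∧
        ∀ i j, i ≠ j → ∀ x, x ∈ P i → x ∉ P j := by
  have loops_case : ∀ (D : V → V → Prop) (A Z : Set V), (∀ x y : V, D x y → x = y) →
      (∀ S : Set V, Sep D A Z S → k ≤ S.ncard) →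
      ∃ P : Fin k → List V,
        (∀ i, (P i ≠ [] ∧ (P i).Nodup ∧ (P i).Chain' D) ∧ (∃ a ∈ A, (P i).head? = some a) ∧
          (∃ z ∈ Z, (P i).getLast? = some z)) ∧
        ∀ i j, i ≠ j → ∀ x, x ∈ P i → x ∉ P j := by
    intro D A Z hloop hcut
    have hsingle : ∀ (p : List V) (hne : p ≠ []), p.Nodup → p.Chain' D → p = [p.head hne] := by
      intro p hne hn hc
      cases p with
      | nil => exact absurd rfl hne
      | cons a t =>
        cases t with
        | nil => rfl
        | cons b t' =>
          have hab : D a b := (List.isChain_cons_cons.1 hc).1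
          have : a = b := hloop a b hab
          subst this
          exact absurd (List.nodup_cons.1 hn).1 (by simp)
    have hAZ : Sep D A Z (A ∩ Z) := by
      intro p hp ⟨a, haA, hha⟩ ⟨z, hzZ, hlz⟩
      have hps := hsingle p hp.1 hp.2.1 hp.2.2
      have ha' : p.head? = some (p.head hp.1) := List.head?_eq_head _
      have haz : a = z := by
        rw [hps] at hha hlz
        simp at hha hlz
        rw [← hha, ← hlz]
      refine ⟨a, mem_of_mem_head? hha, haA, haz ▸ hzZ⟩
    obtain ⟨g, hginj, hgmem⟩ := exists_inj_of_ncard (hcut _ hAZ)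
    refine ⟨fun i => [g i], fun i => ⟨⟨by simp, by simp, List.isChain_singleton _⟩,
      ⟨g i, (hgmem i).1, by simp⟩, ⟨g i, (hgmem i).2, by simp⟩⟩, ?_⟩
    intro i j hij xx hxi hxj
    simp at hxi hxj
    exact hij (hginj (hxi.symm.trans hxj))
  intro n
  induction n with
  | zero =>
    intro D A Z hm hcut
    refine loops_case D A Z ?_ hcut
    intro x y hxy
    by_contra hne
    have hmem : (x, y) ∈ {e : V × V | D e.1 e.2 ∧ e.1 ≠ e.2} := ⟨hxy, hne⟩
    have : {e : V × V | D e.1 e.2 ∧ e.1 ≠ e.2}.ncard = 0 := Nat.le_zero.1 hm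
    rw [Set.ncard_eq_zero (Set.toFinite _)] at this
    rw [this] at hmem
    exact hmem
  | succ n ih =>
    intro D A Z hm hcut
    by_cases hloop : ∀ x y : V, D x y → x = y
    · exact loops_case D A Z hloop hcut
    · push_neg at hloop
      obtain ⟨x, y, hDxy, hxyne⟩ := hloop
      set D' : V → V → Prop := fun a b => D a b ∧ ¬(a = x ∧ b = y) with hD'def
      have hD'D : ∀ a b, D' a b → D a b := fun a b h => h.1
      have hmD' : {e : V × V | D' e.1 e.2 ∧ e.1 ≠ e.2}.ncard ≤ n := by
        have hset : {e : V × V | D' e.1 e.2 ∧ e.1 ≠ e.2}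
            = {e : V × V | D e.1 e.2 ∧ e.1 ≠ e.2} \ {(x, y)} := by
          ext ⟨a, b⟩
          simp only [Set.mem_setOf_eq, Set.mem_diff, Set.mem_singleton_iff, Prod.mk.injEq,
            hD'def]
          tauto
        have hxy_mem : (x, y) ∈ {e : V × V | D e.1 e.2 ∧ e.1 ≠ e.2} := ⟨hDxy, hxyne⟩
        have := Set.ncard_diff_singleton_add_one hxy_mem (Set.toFinite _)
        rw [hset]
        omega
      by_cases hsep : ∀ S₀ : Set V, Sep D' A Z S₀ → k ≤ S₀.ncard
      · obtain ⟨P, h1, h2⟩ := ih D' A Z hmD' hsep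
        exact ⟨P, fun i => ⟨⟨(h1 i).1.1, (h1 i).1.2.1,
          (h1 i).1.2.2.imp (fun a b hab => hab.1)⟩, (h1 i).2.1, (h1 i).2.2⟩, h2⟩
      · push_neg at hsep
        obtain ⟨S₀, hS₀sep, hS₀k⟩ := hsep
        classical
        set Sx : Set V := S₀ ∪ {x} with hSxdef
        set Sy : Set V := S₀ ∪ {y} with hSydef
        have hSxsep : Sep D A Z Sx := by
          intro p hp hha hlz
          by_cases hxp : x ∈ p
          · exact ⟨x, hxp, Set.mem_union_right _ rfl⟩
          · obtain ⟨s, hsp, hs⟩ := hS₀sep p ⟨hp.1, hp.2.1,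
              chain'_del hp.2.2 (Or.inl fun h => hxp (List.mem_of_mem_dropLast h))⟩ hha hlz
            exact ⟨s, hsp, Set.mem_union_left _ hs⟩
        have hSysep : Sep D A Z Sy := by
          intro p hp hha hlz
          by_cases hyp : y ∈ p
          · exact ⟨y, hyp, Set.mem_union_right _ rfl⟩
          · obtain ⟨s, hsp, hs⟩ := hS₀sep p ⟨hp.1, hp.2.1,
              chain'_del hp.2.2 (Or.inr fun h => hyp (List.mem_of_mem_tail h))⟩ hha hlz
            exact ⟨s, hsp, Set.mem_union_left _ hs⟩
        have hSxcard : Sx.ncard = k := by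
          refine le_antisymm ?_ (hcut _ hSxsep)
          calc Sx.ncard ≤ S₀.ncard + ({x} : Set V).ncard := Set.ncard_union_le _ _
          _ = S₀.ncard + 1 := by rw [Set.ncard_singleton]
          _ ≤ k := by omega
        have hSycard : Sy.ncard = k := by
          refine le_antisymm ?_ (hcut _ hSysep)
          calc Sy.ncard ≤ S₀.ncard + ({y} : Set V).ncard := Set.ncard_union_le _ _
          _ = S₀.ncard + 1 := by rw [Set.ncard_singleton]
          _ ≤ k := by omega
        have hxS₀ : x ∉ S₀ := by
          intro hx
          have hSxS : Sx = S₀ := by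
            rw [hSxdef, Set.union_eq_self_of_subset_right (by simpa using hx)]
          rw [hSxS] at hSxcard
          omega
        have hyS₀ : y ∉ S₀ := by
          intro hy
          have hSyS : Sy = S₀ := by
            rw [hSydef, Set.union_eq_self_of_subset_right (by simpa using hy)]
          rw [hSyS] at hSycard
          omega
        have hcutAx : ∀ W : Set V, Sep D' A Sx W → k ≤ W.ncard := by
          intro W hW
          refine hcut W ?_
          intro p hp hha hlz
          by_cases hxp : x ∈ p
          · obtain ⟨q, hqpre, hqne, hqh, hql, hqd⟩ :=
              exists_prefix_first_hit {x} hp.1 ⟨x, hxp, rfl⟩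
            obtain ⟨s, hs, hql'⟩ := hql
            rw [Set.mem_singleton_iff] at hs
            subst hs
            have hqc' : q.Chain' D' := chain'_del (hp.2.2.prefix hqpre)
              (Or.inl fun h => hqd _ h rfl)
            obtain ⟨u, hu, huW⟩ := hW q ⟨hqne, hp.2.1.sublist hqpre.sublist, hqc'⟩
              (by rw [hqh]; exact hha) ⟨s, Set.mem_union_right _ rfl, hql'⟩
            exact ⟨u, hqpre.subset hu, huW⟩
          · have hc' : p.Chain' D' :=
              chain'_del hp.2.2 (Or.inl fun h => hxp (List.mem_of_mem_dropLast h))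
            obtain ⟨s0, hs0p, hs0S⟩ := hS₀sep p ⟨hp.1, hp.2.1, hc'⟩ hha hlz
            obtain ⟨q, hqpre, hqne, hqh, hql, hqd⟩ :=
              exists_prefix_first_hit S₀ hp.1 ⟨s0, hs0p, hs0S⟩
            obtain ⟨s, hs, hql'⟩ := hql
            obtain ⟨u, hu, huW⟩ := hW q ⟨hqne, hp.2.1.sublist hqpre.sublist, hc'.prefix hqpre⟩
              (by rw [hqh]; exact hha) ⟨s, Set.mem_union_left _ hs, hql'⟩
            exact ⟨u, hqpre.subset hu, huW⟩
        have hcutyZ : ∀ W : Set V, Sep D' Sy Z W → k ≤ W.ncard := by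
          intro W hW
          refine hcut W ?_
          intro p hp hha hlz
          by_cases hyp : y ∈ p
          · obtain ⟨q, hqsuf, hqne, hql, hqh, hqd⟩ :=
              exists_suffix_last_hit {y} hp.1 ⟨y, hyp, rfl⟩
            obtain ⟨s, hs, hqh'⟩ := hqh
            rw [Set.mem_singleton_iff] at hs
            subst hs
            have hqc' : q.Chain' D' := chain'_del (hp.2.2.suffix hqsuf)
              (Or.inr fun h => hqd _ h rfl)
            obtain ⟨u, hu, huW⟩ := hW q ⟨hqne, hp.2.1.sublist hqsuf.sublist, hqc'⟩
              ⟨s, Set.mem_union_right _ rfl, hqh'⟩ (by rw [hql]; exact hlz)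
            exact ⟨u, hqsuf.subset hu, huW⟩
          · have hc' : p.Chain' D' :=
              chain'_del hp.2.2 (Or.inr fun h => hyp (List.mem_of_mem_tail h))
            obtain ⟨s0, hs0p, hs0S⟩ := hS₀sep p ⟨hp.1, hp.2.1, hc'⟩ hha hlz
            obtain ⟨q, hqsuf, hqne, hql, hqh, hqd⟩ :=
              exists_suffix_last_hit S₀ hp.1 ⟨s0, hs0p, hs0S⟩
            obtain ⟨s, hs, hqh'⟩ := hqh
            obtain ⟨u, hu, huW⟩ := hW q ⟨hqne, hp.2.1.sublist hqsuf.sublist, hc'.suffix hqsuf⟩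
              ⟨s, Set.mem_union_left _ hs, hqh'⟩ (by rw [hql]; exact hlz)
            exact ⟨u, hqsuf.subset hu, huW⟩
        obtain ⟨P', hP'prop, hP'disj⟩ := ih D' A Sx hmD' hcutAx
        obtain ⟨Q', hQ'prop, hQ'disj⟩ := ih D' Sy Z hmD' hcutyZ
        have hPt0 : ∀ i, ∃ q, q <+: P' i ∧ q ≠ [] ∧ q.head? = (P' i).head? ∧
            (∃ s ∈ Sx, q.getLast? = some s) ∧ ∀ u ∈ q.dropLast, u ∉ Sx := by
          intro i
          obtain ⟨z, hz, hzl⟩ := (hP'prop i).2.2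
          exact exists_prefix_first_hit Sx (hP'prop i).1.1 ⟨z, mem_of_mem_getLast? hzl, hz⟩
        choose Pt hPt1 hPt2 hPt3 hPt4 hPt5 using hPt0
        choose e heSx helast using hPt4
        have hQt0 : ∀ j, ∃ q, q <:+ Q' j ∧ q ≠ [] ∧ q.getLast? = (Q' j).getLast? ∧
            (∃ s ∈ Sy, q.head? = some s) ∧ ∀ u ∈ q.tail, u ∉ Sy := by
          intro j
          obtain ⟨z, hz, hzh⟩ := (hQ'prop j).2.1
          exact exists_suffix_last_hit Sy (hQ'prop j).1.1 ⟨z, mem_of_mem_head? hzh, hz⟩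
        choose Qt hQt1 hQt2 hQt3 hQt4 hQt5 using hQt0
        choose b hbSy hbhead using hQt4
        have hPtpath : ∀ i, Pt i ≠ [] ∧ (Pt i).Nodup ∧ (Pt i).Chain' D' :=
          fun i => ⟨hPt2 i, (hP'prop i).1.2.1.sublist (hPt1 i).sublist,
            (hP'prop i).1.2.2.prefix (hPt1 i)⟩
        have hQtpath : ∀ j, Qt j ≠ [] ∧ (Qt j).Nodup ∧ (Qt j).Chain' D' :=
          fun j => ⟨hQt2 j, (hQ'prop j).1.2.1.sublist (hQt1 j).sublist,
            (hQ'prop j).1.2.2.suffix (hQt1 j)⟩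
        have heinj : Function.Injective e := by
          intro i j h
          by_contra hne
          exact hP'disj i j hne (e i) ((hPt1 i).subset (mem_of_mem_getLast? (helast i)))
            (by rw [h]; exact (hPt1 j).subset (mem_of_mem_getLast? (helast j)))
        have hbinj : Function.Injective b := by
          intro i j h
          by_contra hne
          exact hQ'disj i j hne (b i) ((hQt1 i).subset (mem_of_mem_head? (hbhead i)))
            (by rw [h]; exact (hQt1 j).subset (mem_of_mem_head? (hbhead j)))
        have hesurj : ∀ s ∈ Sx, ∃ i, e i = s :=
          surj_of_inj_ncard e heinj heSx (le_of_eq hSxcard)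
        have hbsurj : ∀ s ∈ Sy, ∃ j, b j = s :=
          surj_of_inj_ncard b hbinj hbSy (le_of_eq hSycard)
        have claim4 : ∀ i j u, u ∈ Pt i → u ∈ Qt j →
            (Pt i).getLast? = some u ∧ (Qt j).head? = some u ∧ u ∈ S₀ := by
          intro i j u hui huj
          obtain ⟨q₁, h1pre, h1ne, h1h, h1l, h1d⟩ :=
            exists_prefix_first_hit ({u} : Set V) (hPt2 i) ⟨u, hui, rfl⟩
          obtain ⟨u₁, hu₁, h1l'⟩ := h1l
          rw [Set.mem_singleton_iff] at hu₁
          rw [hu₁] at h1l'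
          obtain ⟨q₂, h2suf, h2ne, h2l, h2h, h2d⟩ :=
            exists_suffix_last_hit ({u} : Set V) (hQt2 j) ⟨u, huj, rfl⟩
          obtain ⟨u₂, hu₂, h2h'⟩ := h2h
          rw [Set.mem_singleton_iff] at hu₂
          rw [hu₂] at h2h'
          have h2cons : q₂ = u :: q₂.tail := head_cons_eq h2h'
          have h1c : q₁.Chain' D' := (hPtpath i).2.2.prefix h1pre
          have h2c : q₂.Chain' D' := (hQtpath j).2.2.suffix h2suf
          have hwc : (q₁ ++ q₂.tail).Chain' D' := by
            rw [List.Chain', List.isChain_append]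
            refine ⟨h1c, ?_, ?_⟩
            · have h2c2 := h2c
              rw [h2cons] at h2c2
              exact h2c2.tail
            · intro xx hxx yy hyy
              have hxu : xx = u := by
                rw [h1l'] at hxx
                exact (by simpa using hxx : u = xx).symm
              subst hxu
              have h2c' := h2c
              rw [h2cons] at h2c'
              exact (List.isChain_cons.1 h2c').1 yy hyy
          have hwne : q₁ ++ q₂.tail ≠ [] := fun h => h1ne (List.append_eq_nil_iff.1 h).1
          have hwh : (q₁ ++ q₂.tail).head? = (Pt i).head? := by
            rw [head?_append_of_ne_nil _ h1ne, h1h]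
          have hwl : (q₁ ++ q₂.tail).getLast? = (Qt j).getLast? :=
            (getLast?_append_tail h1l' h2h').trans h2l
          obtain ⟨r, hrne, hrn, hrc, hrh, hrl, hrmem⟩ :=
            exists_path_of_walk (q₁ ++ q₂.tail).length _ le_rfl hwne hwc
          obtain ⟨s, hsr, hsS₀⟩ := hS₀sep r ⟨hrne, hrn, hrc⟩
            (by rw [hrh, hwh, hPt3 i]; exact (hP'prop i).2.1)
            (by rw [hrl, hwl, hQt3 j]; exact (hQ'prop j).2.2)
          rcases List.mem_append.1 (hrmem s hsr) with hsq | hsq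
          · have hsPt : s ∈ Pt i := h1pre.subset hsq
            have hlast : (Pt i).getLast? = some s :=
              last_of_mem_not_dropLast (hPt2 i) hsPt
                (fun h => hPt5 i s h (Set.mem_union_left _ hsS₀))
            have hq1l : q₁.getLast? = some s :=
              last_eq_of_prefix h1pre (hPtpath i).2.1 hlast hsq
            have hus : u = s := by
              rw [h1l'] at hq1l
              simpa using hq1l
            rw [← hus] at hlast hsS₀
            refine ⟨hlast, ?_, hsS₀⟩
            exact head_of_mem_not_tail (hQt2 j) huj
              (fun h => hQt5 j u h (Set.mem_union_left _ hsS₀))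
          · exact absurd (Set.mem_union_left _ hsS₀)
              (hQt5 j s (tail_subset_tail h2suf s hsq))
        have htSy : ∀ i : Fin k, (if e i = x then y else e i) ∈ Sy := by
          intro i
          by_cases h : e i = x
          · rw [if_pos h]
            exact Set.mem_union_right _ rfl
          · rw [if_neg h]
            rcases (Set.mem_union _ _ _).1 (hSxdef ▸ heSx i) with hS | hx'
            · exact Set.mem_union_left _ hS
            · exact absurd (by simpa using hx') h
        choose σ hσ using fun i => hbsurj _ (htSy i)
        have hσinj : Function.Injective σ := by
          intro i j h
          have hbij : b (σ i) = b (σ j) := congrArg b h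
          rw [hσ i, hσ j] at hbij
          by_cases hi : e i = x <;> by_cases hj : e j = x
          · exact heinj (by rw [hi, hj])
          · rw [if_pos hi, if_neg hj] at hbij
            exfalso
            rcases (Set.mem_union _ _ _).1 (hSxdef ▸ heSx j) with hS | hx'
            · exact hyS₀ (hbij ▸ hS)
            · exact hj (by simpa using hx')
          · rw [if_neg hi, if_pos hj] at hbij
            exfalso
            rcases (Set.mem_union _ _ _).1 (hSxdef ▸ heSx i) with hS | hx'
            · exact hyS₀ (hbij ▸ hS)
            · exact hi (by simpa using hx')
          · rw [if_neg hi, if_neg hj] at hbij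
            exact heinj hbij
        set R : Fin k → List V :=
          fun i => if e i = x then Pt i ++ Qt (σ i) else Pt i ++ (Qt (σ i)).tail with hRdef
        have hPtD : ∀ i, Pt i ≠ [] ∧ (Pt i).Nodup ∧ (Pt i).Chain' D :=
          fun i => ⟨(hPtpath i).1, (hPtpath i).2.1, (hPtpath i).2.2.imp fun a b hab => hab.1⟩
        have hQtD : ∀ j, Qt j ≠ [] ∧ (Qt j).Nodup ∧ (Qt j).Chain' D :=
          fun j => ⟨(hQtpath j).1, (hQtpath j).2.1, (hQtpath j).2.2.imp fun a b hab => hab.1⟩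
        have hRprop : ∀ i, (R i ≠ [] ∧ (R i).Nodup ∧ (R i).Chain' D) ∧
            (R i).head? = (Pt i).head? ∧ (R i).getLast? = (Qt (σ i)).getLast? ∧
            (∀ u ∈ R i, u ∈ Pt i ∨ u ∈ Qt (σ i)) := by
          intro i
          by_cases hix : e i = x
          · have hRi : R i = Pt i ++ Qt (σ i) := by rw [hRdef]; simp only [if_pos hix]
            have hdisj : ∀ u ∈ Pt i, u ∉ Qt (σ i) := by
              intro u hu hu2
              obtain ⟨hl, hh, hS⟩ := claim4 i (σ i) u hu hu2
              have hue : u = e i := by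
                rw [helast i] at hl
                exact (Option.some_inj.1 hl).symm
              rw [hue, hix] at hS
              exact hxS₀ hS
            have hg := glue_edge (hPtD i) (hQtD (σ i))
              (by rw [helast i, hix])
              (by rw [hbhead (σ i)]; rw [hσ i, if_pos hix]) hDxy hdisj
            rw [hRi]
            exact ⟨⟨hg.1, hg.2.1, hg.2.2.1⟩, hg.2.2.2.1, hg.2.2.2.2,
              fun u hu => List.mem_append.1 hu⟩
          · have hRi : R i = Pt i ++ (Qt (σ i)).tail := by rw [hRdef]; simp only [if_neg hix]
            have hint : ∀ u ∈ Pt i, u ∈ Qt (σ i) → u = e i := by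
              intro u hu hu2
              obtain ⟨hl, _, _⟩ := claim4 i (σ i) u hu hu2
              rw [helast i] at hl
              exact (Option.some_inj.1 hl).symm
            have hg := glue_shared (hPtD i) (hQtD (σ i)) (helast i)
              (by rw [hbhead (σ i)]; rw [hσ i, if_neg hix]) hint
            rw [hRi]
            exact ⟨⟨hg.1, hg.2.1, hg.2.2.1⟩, hg.2.2.2.1, hg.2.2.2.2.1, hg.2.2.2.2.2⟩
        refine ⟨R, ?_, ?_⟩
        · intro i
          refine ⟨(hRprop i).1, ?_, ?_⟩
          · obtain ⟨a, ha, hha⟩ := (hP'prop i).2.1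
            exact ⟨a, ha, by rw [(hRprop i).2.1, hPt3 i]; exact hha⟩
          · obtain ⟨z, hz, hzl⟩ := (hQ'prop (σ i)).2.2
            exact ⟨z, hz, by rw [(hRprop i).2.2.1, hQt3 (σ i)]; exact hzl⟩
        · intro i j hij u hui huj
          have key : ∀ i' j' : Fin k, i' ≠ j' → u ∈ Pt i' → u ∈ Qt (σ j') → False := by
            intro i' j' hij' hPi hQj
            obtain ⟨hl, hh, hS⟩ := claim4 i' (σ j') u hPi hQj
            have hue : u = e i' := by
              rw [helast i'] at hl
              exact (Option.some_inj.1 hl).symm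
            have hub : u = b (σ j') := by
              rw [hbhead (σ j')] at hh
              exact (Option.some_inj.1 hh).symm
            rw [hσ j'] at hub
            by_cases hjx : e j' = x
            · rw [if_pos hjx] at hub
              exact hyS₀ (hub ▸ hS)
            · rw [if_neg hjx] at hub
              exact hij' (heinj (hue.symm.trans hub))
          rcases (hRprop i).2.2.2 u hui with hPi | hQi <;>
            rcases (hRprop j).2.2.2 u huj with hPj | hQj
          · exact hP'disj i j hij u ((hPt1 i).subset hPi) ((hPt1 j).subset hPj)
          · exact key i j hij hPi hQj
          · exact key j i hij.symm hPj hQi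
          · exact hQ'disj (σ i) (σ j) (fun h => hij (hσinj h)) u
              ((hQt1 (σ i)).subset hQi) ((hQt1 (σ j)).subset hQj)


end MGR

/-- If `G` satisfies condition NC with parameter `F` and the in-neighborhood of `A − F`
inside `B` has size at most `f`, then `A` (f+1)-propagates to `B − F` avoiding `F`. -/
theorem A_propagates_B [Fintype V] (E : V → V → Prop) (f : ℕ) (F A B : Set V)
    (hF : F.ncard ≤ f) (hNC : CondNC E f F)
    (hpart : A ∪ B = Set.univ) (hdisj : A ∩ B = ∅)
    (hA : (A \ F).Nonempty) (hB : (B \ F).Nonempty)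
    (hsmall : (inNbr E B (A \ F)).ncard ≤ f) :
    Propagates E f F A (B \ F) := by
  classical
  intro v hv
  obtain ⟨hvB, hvF⟩ := hv
  have hvA : v ∉ A := fun h => by
    have hm : v ∈ A ∩ B := ⟨h, hvB⟩
    rw [hdisj] at hm
    exact hm
  have hBc : B = Aᶜ := by
    ext u
    constructor
    · intro hu h
      have hm : u ∈ A ∩ B := ⟨h, hu⟩
      rw [hdisj] at hm
      exact hm
    · intro hu
      have hm : u ∈ A ∪ B := hpart ▸ Set.mem_univ u
      rcases hm with h | h
      · exact absurd h hu
      · exact h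
  set D : V → V → Prop :=
    fun a bb => E a bb ∧ ¬(a ∈ F ∧ a ∉ A) ∧ a ≠ v ∧ bb ∉ F ∧ bb ≠ v with hD
  set Z : Set V := {u | E u v ∧ u ≠ v ∧ ¬(u ∈ F ∧ u ∉ A)} with hZ
  have hgood : ∀ p : List V, p.Chain' D → (∃ a ∈ A, p.head? = some a) →
      ∀ x ∈ p, x ≠ v ∧ ¬(x ∈ F ∧ x ∉ A) := by
    intro p hc hha x hx
    obtain ⟨a, haA, hha⟩ := hha
    rw [MGR.head_cons_eq hha] at hx
    rcases List.mem_cons.1 hx with rfl | hx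
    · exact ⟨fun h => hvA (h ▸ haA), fun h => h.2 haA⟩
    · obtain ⟨w, hw, hDwx⟩ := MGR.tail_target hc x hx
      exact ⟨hDwx.2.2.2.2, fun h => hDwx.2.2.2.1 h.1⟩
  have hcut : ∀ S : Set V, MGR.Sep D A Z S → f + 1 ≤ S.ncard := by
    intro S hS
    by_contra hle
    push_neg at hle
    set S' : Set V := S ∩ {u | u ≠ v ∧ ¬(u ∈ F ∧ u ∉ A)} with hS'
    have hS'sep : MGR.Sep D A Z S' := by
      intro p hp hha hlz
      obtain ⟨xx, hxp, hxS⟩ := hS p hp hha hlz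
      exact ⟨xx, hxp, hxS, hgood p hp.2.2 hha xx hxp⟩
    have hS'card : S'.ncard ≤ f := by
      have h1 : S'.ncard ≤ S.ncard :=
        Set.ncard_le_ncard (by rw [hS']; exact Set.inter_subset_left) (Set.toFinite _)
      omega
    set r : V → V → Prop := fun a bb => D a bb ∧ a ∉ S' ∧ bb ∉ S' with hr
    set reach : Set V := {w | ∃ a ∈ A, Relation.ReflTransGen r a w ∧ a ∉ S'} with hreach
    set C : Set V := (reach ∪ S') \ A with hC
    set R : Set V := (A ∪ C)ᶜ with hR
    have hAreach : ∀ w ∈ reach, w ≠ v := by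
      intro w hw
      rw [hreach] at hw
      obtain ⟨a, haA, hrtg, haS⟩ := hw
      rcases Relation.ReflTransGen.cases_tail hrtg with h | ⟨c, _, hcb⟩
      · rw [h]
        exact fun hh => hvA (hh ▸ haA)
      · exact hcb.1.2.2.2.2
    have hnopath : ∀ u, u ∈ Z → ∀ a ∈ A, a ∉ S' → Relation.ReflTransGen r a u → False := by
      intro u huZ a haA haS hrtg
      obtain ⟨l, hchain, hlast⟩ := List.exists_isChain_cons_of_relationReflTransGen hrtg
      have hwc : (a :: l).Chain' r := hchain
      obtain ⟨p, hpne, hpn, hpc, hph, hpl, hpmem⟩ :=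
        MGR.exists_path_of_walk (a :: l).length (a :: l) le_rfl (by simp) hwc
      have hpD : p.Chain' D := hpc.imp (fun a b hab => hab.1)
      obtain ⟨xx, hxp, hxS⟩ := hS'sep p ⟨hpne, hpn, hpD⟩
        ⟨a, haA, by rw [hph]; simp⟩
        ⟨u, huZ, by
          rw [hpl, List.getLast?_eq_getLast (List.cons_ne_nil a l)]
          exact congrArg some hlast⟩
      have hxw : xx ∈ a :: l := hpmem xx hxp
      rcases List.mem_cons.1 hxw with rfl | hxl
      · exact haS hxS
      · obtain ⟨w, hw, hrw⟩ := MGR.tail_target hwc xx hxl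
        exact hrw.2.2 hxS
    have hRv : v ∈ R := by
      rw [hR]
      simp only [Set.mem_compl_iff, Set.mem_union]
      rintro (h | h)
      · exact hvA h
      · rw [hC] at h
        rcases h.1 with h1 | h1
        · exact hAreach v h1 rfl
        · rw [hS'] at h1
          exact h1.2.1 rfl
    have hunion : A ∪ C ∪ R = Set.univ := by rw [hR]; exact Set.union_compl_self _
    have hd1 : A ∩ C = ∅ := by
      ext u
      simp only [Set.mem_inter_iff, Set.mem_empty_iff_false, iff_false, not_and]
      intro h1 h2
      rw [hC] at h2
      exact h2.2 h1
    have hd2 : A ∩ R = ∅ := by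
      ext u
      simp only [Set.mem_inter_iff, Set.mem_empty_iff_false, iff_false, not_and]
      intro h1 h2
      rw [hR] at h2
      exact h2 (Or.inl h1)
    have hd3 : C ∩ R = ∅ := by
      ext u
      simp only [Set.mem_inter_iff, Set.mem_empty_iff_false, iff_false, not_and]
      intro h1 h2
      rw [hR] at h2
      exact h2 (Or.inr h1)
    have hRne : (R \ F).Nonempty := ⟨v, hRv, hvF⟩
    rcases hNC A C R hunion hd1 hd2 hd3 hA hRne with hbig | hbig
    · have hRC : R ∪ C = B := by
        rw [hBc]
        ext u
        simp only [Set.mem_union, Set.mem_compl_iff]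
        constructor
        · rintro (h | h)
          · intro hA'
            rw [hR] at h
            exact h (Or.inl hA')
          · intro hA'
            rw [hC] at h
            exact h.2 hA'
        · intro h
          by_cases hc : u ∈ C
          · exact Or.inr hc
          · left
            rw [hR]
            rintro (h1 | h1)
            · exact h h1
            · exact hc h1
      rw [hRC] at hbig
      omega
    · have hsub : inNbr E (A ∪ C) (R \ F) ⊆ S' := by
        rintro u ⟨huAC, yy, hyy, hE⟩
        by_contra huS
        have hu' : ∃ a ∈ A, Relation.ReflTransGen r a u ∧ a ∉ S' := by
          rcases huAC with h | h
          · exact ⟨u, h, Relation.ReflTransGen.refl, huS⟩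
          · rw [hC] at h
            rcases h.1 with h1 | h1
            · rw [hreach] at h1
              exact h1
            · exact absurd h1 huS
        obtain ⟨a, haA, hrtg, haS⟩ := hu'
        have huv : u ≠ v ∧ ¬(u ∈ F ∧ u ∉ A) := by
          rcases Relation.ReflTransGen.cases_tail hrtg with h | ⟨c, _, hcb⟩
          · rw [h]
            exact ⟨fun hh => hvA (hh ▸ haA), fun hh => hh.2 haA⟩
          · exact ⟨hcb.1.2.2.2.2, fun hh => hcb.1.2.2.2.1 hh.1⟩
        by_cases hyv : yy = v
        · exact hnopath u ⟨hyv ▸ hE, huv.1, huv.2⟩ a haA haS hrtg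
        · have hyyR : yy ∈ R := hyy.1
          have hyyF : yy ∉ F := hyy.2
          have hyyS' : yy ∉ S' := by
            intro h
            have hm : yy ∈ A ∪ C := by
              by_cases hyA : yy ∈ A
              · exact Or.inl hyA
              · exact Or.inr (by rw [hC]; exact ⟨Or.inr h, hyA⟩)
            rw [hR] at hyyR
            exact hyyR hm
          have hDuy : D u yy := ⟨hE, huv.2, huv.1, hyyF, hyv⟩
          have hyreach : yy ∈ reach := by
            rw [hreach]
            exact ⟨a, haA, hrtg.tail ⟨hDuy, huS, hyyS'⟩, haS⟩
          have hm : yy ∈ A ∪ C := by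
            by_cases hyA : yy ∈ A
            · exact Or.inl hyA
            · exact Or.inr (by rw [hC]; exact ⟨Or.inl hyreach, hyA⟩)
          rw [hR] at hyyR
          exact hyyR hm
      have hle2 := Set.ncard_le_ncard hsub (Set.toFinite _)
      omega
  obtain ⟨P, hPprop, hPdisj⟩ :=
    MGR.menger (f + 1) ({e : V × V | D e.1 e.2 ∧ e.1 ≠ e.2}.ncard) D A Z le_rfl hcut
  refine ⟨fun i => P i ++ [v], ?_, ?_⟩
  · intro i
    obtain ⟨⟨hne, hnd, hch⟩, ⟨a, haA, hha⟩, ⟨z, hzZ, hzl⟩⟩ := hPprop i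
    have hvnot : v ∉ P i :=
      fun h => (hgood (P i) hch ⟨a, haA, hha⟩ v h).1 rfl
    refine ⟨⟨⟨by simp, ?_, ?_⟩, ⟨a, haA, ?_⟩, ?_⟩, ?_⟩
    · refine List.nodup_append.2 ⟨hnd, by simp, ?_⟩
      intro xx hx yy hx2 hxy
      simp only [List.mem_singleton] at hx2
      subst hx2
      exact hvnot (by rw [← hxy]; exact hx)
    · rw [List.Chain', List.isChain_append]
      refine ⟨hch.imp (fun a b hab => hab.1), List.isChain_singleton _, ?_⟩
      intro xx hxx yy hyy
      have hxz : xx = z := by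
        rw [hzl] at hxx
        exact (by simpa using hxx : z = xx).symm
      have hyv : yy = v := (by simpa using hyy : v = yy).symm
      subst hxz
      subst hyv
      rw [hZ] at hzZ
      exact hzZ.1
    · rw [List.head?_append_of_ne_nil _ hne]
      exact hha
    · exact List.getLast?_concat
    · intro xx hxx
      obtain ⟨a0, t, hpt⟩ : ∃ a0 t, P i = a0 :: t := by
        cases hp : P i with
        | nil => exact absurd hp hne
        | cons a0 t => exact ⟨a0, t, rfl⟩
      have hxx' : xx ∈ (P i ++ [v]).tail.dropLast := hxx
      rw [hpt, List.cons_append, List.tail_cons, List.dropLast_concat] at hxx'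
      obtain ⟨w, hw, hDwx⟩ := MGR.tail_target (hpt ▸ hch) xx (by exact hxx')
      exact hDwx.2.2.2.1
  · intro i j hij xx hxi hxj
    rcases List.mem_append.1 hxi with h1 | h1
    · rcases List.mem_append.1 hxj with h2 | h2
      · exact absurd h2 (hPdisj i j hij xx h1)
      · simpa using h2
    · simpa using h1
end

section
/- Let G be a finite directed graph and F ⊆ V with |F| ≤ f. Suppose there is a partition (A,B) of V with A−F and B−F nonempty such that B does not (f+1)-propagate to A−F avoiding F (i.e., some vertex t ∈ A−F has at most f pairwise internally-disjoint paths from B excluding F). Then there exists a partition (A',B') of V with A' ⊆ A, B ⊆ B', both A'−F and B'−F nonempty, such that the in-neighborhood of A'−F contained in B' has size at most f. -/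
open Set

variable {V : Type*}

/-!
Fix `t ∈ A - F` with at most `f` internally disjoint `B`-`t` paths avoiding `F`. Keep only the
edges of `G` entering `V - (F ∪ {t})`: a `B`-`t` path avoiding `F` is then a walk from `B` to an
in-neighbour of `t` followed by `t`, so by Menger's theorem some set `S` of at most `f` vertices
meets all such walks. Menger's theorem is proved by induction on the edge set: if deleting an edge
`uv` leaves a separator `S` with fewer than `k` vertices, then `S ∪ {u}` and `S ∪ {v}` are
separators of size `k`, and disjoint walks to the former and from the latter glue through `S` or
through `uv`. Finally let `A'` be the set of vertices reaching `t` by edges into `V - F` whose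
tails avoid `S ∪ {t}`: it misses `B` because `S` separates, and every in-neighbour of `A' - F`
outside `A'` lies in `S`.
-/

section List

variable {R : V → V → Prop} {T : Set V} {p q r : List V} {x : V}

theorem List.IsChain.forall_mem_tail {P : V → Prop} :
    ∀ {l : List V}, l.IsChain (fun a b => R a b ∧ P b) → ∀ y ∈ l.tail, P y
  | [], _, _, h => by simp at h
  | [_], _, _, h => by simp at h
  | _ :: b :: l, h, y, hy => by
    rw [List.isChain_cons_cons] at h
    rcases List.mem_cons.1 hy with rfl | hy
    · exact h.1.2
    · exact forall_mem_tail h.2 y hy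

theorem List.exists_eq_append_cons_of_exists_mem (h : ∃ s ∈ T, s ∈ p) :
    ∃ q t r, p = q ++ t :: r ∧ t ∈ T ∧ ∀ y ∈ q, y ∉ T := by
  classical
  obtain ⟨s, hsT, hsp⟩ := h
  obtain ⟨t, ht⟩ := Option.isSome_iff_exists.1
    ((List.find?_isSome (p := fun x => decide (x ∈ T))).2 ⟨s, hsp, by simpa using hsT⟩)
  obtain ⟨htT, q, r, rfl, hq⟩ := List.find?_eq_some_iff_append.1 ht
  exact ⟨q, t, r, rfl, by simpa using htT, by simpa using hq⟩

theorem List.eq_head_of_append_cons_eq_cons {c d : List V} {m s : V} (h : c ++ x :: d = m :: r)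
    (hr : ∀ y ∈ r, y ∉ T) (hs : s ∈ T) (hsx : s ∈ x :: d) : x = m ∧ s = m := by
  cases c with
  | nil =>
    obtain ⟨rfl, rfl⟩ := List.cons_eq_cons.1 h
    refine ⟨rfl, ?_⟩
    rcases List.mem_cons.1 hsx with rfl | hsd
    · rfl
    · exact absurd hs (hr s hsd)
  | cons c₀ c =>
    obtain ⟨-, rfl⟩ := List.cons_eq_cons.1 h
    exact absurd hs (hr s (by simp_all))

theorem List.eq_getLast_of_append_cons_eq_concat {a b : List V} {l s : V}
    (h : a ++ x :: b = q ++ [l]) (hq : ∀ y ∈ q, y ∉ T) (hs : s ∈ T) (hsx : s ∈ a ++ [x]) :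
    x = l ∧ s = l := by
  have h' : b.reverse ++ x :: a.reverse = l :: q.reverse := by
    simpa using congrArg List.reverse h
  exact List.eq_head_of_append_cons_eq_cons h' (by simpa using hq) hs (by simpa [or_comm] using hsx)

end List

section Walks

variable {R R' : V → V → Prop} {X X' Y Y' : Set V} {p q r : List V} {a b t : V}

def IsWalk (R : V → V → Prop) (X Y : Set V) (p : List V) : Prop :=
  p.IsChain R ∧ (∃ a ∈ X, p.head? = some a) ∧ ∃ b ∈ Y, p.getLast? = some b

theorem isWalk_singleton : IsWalk R X Y [a] ↔ a ∈ X ∧ a ∈ Y := by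
  simp [IsWalk]

theorem IsWalk.ne_nil (h : IsWalk R X Y p) : p ≠ [] := by
  rintro rfl
  simp [IsWalk] at h

theorem IsWalk.head_mem (h : IsWalk R X Y (a :: p)) : a ∈ X := by
  obtain ⟨x, hx, hax⟩ := h.2.1
  exact Option.some_inj.1 hax ▸ hx

theorem IsWalk.imp (h : IsWalk R X Y p) (hR : ∀ a b, R a b → R' a b) : IsWalk R' X Y p :=
  ⟨h.1.imp hR, h.2⟩

theorem IsWalk.mono (h : IsWalk R X Y p) (hX : X ⊆ X') (hY : Y ⊆ Y') : IsWalk R X' Y' p :=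
  ⟨h.1, h.2.1.imp fun _ ha => ⟨hX ha.1, ha.2⟩, h.2.2.imp fun _ hb => ⟨hY hb.1, hb.2⟩⟩

theorem isWalk_reverse : IsWalk (flip R) Y X p.reverse ↔ IsWalk R X Y p := by
  simp only [IsWalk, List.isChain_reverse, List.head?_reverse, List.getLast?_reverse]
  exact ⟨fun ⟨h, hY, hX⟩ => ⟨h, hX, hY⟩, fun ⟨h, hX, hY⟩ => ⟨h, hY, hX⟩⟩

theorem IsWalk.prefix_to (h : IsWalk R X Y (q ++ t :: r)) : IsWalk R X {t} (q ++ [t]) := by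
  refine ⟨?_, ?_, t, rfl, by simp⟩
  · exact (show (q ++ [t] ++ r).IsChain R by simpa using h.1).left_of_append
  · obtain ⟨a, ha, h'⟩ := h.2.1
    exact ⟨a, ha, by simpa [List.head?_append] using h'⟩

theorem IsWalk.suffix_from (h : IsWalk R X Y (q ++ t :: r)) : IsWalk R {t} Y (t :: r) := by
  refine ⟨h.1.right_of_append, ⟨t, rfl, rfl⟩, ?_⟩
  obtain ⟨b, hb, h'⟩ := h.2.2
  exact ⟨b, hb, by simpa [List.getLast?_append] using h'⟩

theorem IsWalk.glue (hp : IsWalk R X {a} p) (hq : IsWalk R {b} Y q)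
    (hab : Relation.ReflGen R a b) : ∃ w, IsWalk R X Y w ∧ ∀ x ∈ w, x ∈ p ∨ x ∈ q := by
  obtain ⟨p, rfl⟩ : ∃ p', p = p' ++ [a] := by
    obtain ⟨a', rfl, h⟩ := hp.2.2
    exact List.getLast?_eq_some_iff.1 h
  obtain ⟨q, rfl⟩ : ∃ q', q = b :: q' := by
    obtain ⟨b', rfl, h⟩ := hq.2.1
    exact List.head?_eq_some_iff.1 h
  have hhead : ∀ s, ∃ x ∈ X, (p ++ a :: s).head? = some x := fun s => by
    obtain ⟨x, hx, h⟩ := hp.2.1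
    exact ⟨x, hx, by simpa [List.head?_append] using h⟩
  have hlast : ∀ s, ∃ y ∈ Y, (s ++ b :: q).getLast? = some y := fun s => by
    obtain ⟨y, hy, h⟩ := hq.2.2
    exact ⟨y, hy, by simpa [List.getLast?_append] using h⟩
  rcases hab with _ | hab
  · refine ⟨p ++ a :: q, ⟨?_, hhead q, hlast p⟩, by simp; tauto⟩
    simpa using hp.1.append_overlap (l₃ := q) (by simpa using hq.1) (List.cons_ne_nil _ _)
  · refine ⟨p ++ a :: b :: q, ⟨?_, hhead (b :: q), by simpa using hlast (p ++ [a])⟩, by simp; tauto⟩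
    simpa using hp.1.append hq.1 (by simpa using hab)

theorem IsWalk.exists_nodup (h : IsWalk R X Y p) : ∃ p', IsWalk R X Y p' ∧ p'.Nodup ∧ p' ⊆ p := by
  induction p generalizing X with
  | nil => exact absurd rfl h.ne_nil
  | cons a p ih =>
    have ha := h.head_mem
    cases p with
    | nil => exact ⟨[a], h, List.nodup_singleton a, List.Subset.refl _⟩
    | cons b p =>
      obtain ⟨p', hp', hnd, hsub⟩ := ih (X := {b})
        ⟨h.1.tail, ⟨b, rfl, rfl⟩, by simpa [List.getLast?_cons_cons] using h.2.2⟩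
      by_cases hap : a ∈ p'
      · obtain ⟨c, d, rfl⟩ := List.append_of_mem hap
        exact ⟨a :: d, hp'.suffix_from.mono (singleton_subset_iff.2 ha) subset_rfl,
          hnd.sublist (List.sublist_append_right c _),
          List.cons_subset_cons a fun x hx => hsub (by simp [hx])⟩
      · refine ⟨a :: p', ⟨?_, ⟨a, ha, rfl⟩, ?_⟩, List.nodup_cons.2 ⟨hap, hnd⟩,
          List.cons_subset_cons a hsub⟩
        · obtain ⟨b', hb'b, hb'⟩ := hp'.2.1
          refine hp'.1.cons fun y hy => ?_
          obtain rfl : y = b := (Option.some_inj.1 (hy.symm.trans hb')).trans hb'b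
          exact (List.isChain_cons_cons.1 h.1).1
        · obtain ⟨y, hy, hpy⟩ := hp'.2.2
          exact ⟨y, hy, by simp [List.getLast?_cons, hpy]⟩

end Walks

section Menger

variable {R R' : V → V → Prop} {X Y S T : Set V} {p q r : List V} {u v x : V} {k : ℕ}

def Separates (R : V → V → Prop) (X Y S : Set V) : Prop :=
  ∀ p, IsWalk R X Y p → ∃ s ∈ S, s ∈ p

def HasDisjointWalks (R : V → V → Prop) (X Y : Set V) (k : ℕ) : Prop :=
  ∃ P : Fin k → List V, (∀ i, IsWalk R X Y (P i)) ∧ Pairwise fun i j => (P i).Disjoint (P j)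

def deleteEdge (R : V → V → Prop) (u v : V) : V → V → Prop :=
  fun a b => R a b ∧ ¬(a = u ∧ b = v)

theorem separates_flip : Separates (flip R) Y X S ↔ Separates R X Y S := by
  refine ⟨fun h p hp => ?_, fun h p hp => ?_⟩
  · simpa using h p.reverse (isWalk_reverse.2 hp)
  · simpa using h p.reverse ((isWalk_reverse (R := flip R)).2 hp)

theorem HasDisjointWalks.flip (h : HasDisjointWalks R X Y k) :
    HasDisjointWalks (flip R) Y X k := by
  obtain ⟨P, hP, hPd⟩ := h
  exact ⟨fun i => (P i).reverse, fun i => isWalk_reverse.2 (hP i),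
    fun i j hij x hi hj => hPd hij (List.mem_reverse.1 hi) (List.mem_reverse.1 hj)⟩

theorem HasDisjointWalks.imp (h : HasDisjointWalks R X Y k) (hR : ∀ a b, R a b → R' a b) :
    HasDisjointWalks R' X Y k :=
  let ⟨P, hP, hPd⟩ := h
  ⟨P, fun i => (hP i).imp hR, hPd⟩

theorem deleteEdge_lt (h : R u v) : deleteEdge R u v < R :=
  lt_of_le_of_ne (fun _ _ hab => hab.1) fun heq => (heq ▸ h).2 ⟨rfl, rfl⟩

theorem flip_deleteEdge : flip (deleteEdge R u v) = deleteEdge (flip R) v u := by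
  ext a b
  simp only [flip, deleteEdge, and_comm]

theorem List.IsChain.deleteEdge_of_not_mem {t : V} :
    ∀ {q : List V}, (q ++ [t]).IsChain R → u ∉ q → (q ++ [t]).IsChain (deleteEdge R u v)
  | [], _, _ => List.isChain_singleton _
  | a :: q, h, hu => by
    rw [List.cons_append, List.isChain_cons] at h ⊢
    simp only [List.mem_cons, not_or] at hu
    exact ⟨fun y hy => ⟨h.1 y hy, fun h' => hu.1 h'.1.symm⟩, deleteEdge_of_not_mem h.2 hu.2⟩

theorem Separates.insert_of_deleteEdge {w : V} (hS : Separates (deleteEdge R u v) X Y S)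
    (hw : w = u ∨ w = v) : Separates R X Y (insert w S) := by
  intro p hp
  by_cases hwp : w ∈ p
  · exact ⟨w, mem_insert _ _, hwp⟩
  · have hp' : IsWalk (deleteEdge R u v) X Y p := by
      refine ⟨hp.1.imp_of_mem_imp fun a b ha hb hab => ⟨hab, ?_⟩, hp.2⟩
      rintro ⟨rfl, rfl⟩
      rcases hw with rfl | rfl <;> contradiction
    obtain ⟨s, hs, hsp⟩ := hS p hp'
    exact ⟨s, mem_insert_of_mem _ hs, hsp⟩

/-- The initial segment of an `R`-walk up to its first vertex in `insert u S` is a walk of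
`deleteEdge R u v`. -/
theorem Separates.of_deleteEdge_insert (hS : Separates (deleteEdge R u v) X Y S)
    (hT : Separates (deleteEdge R u v) X (insert u S) T) : Separates R X Y T := by
  intro p hp
  obtain ⟨q, s, r, rfl, hs, hq⟩ :=
    List.exists_eq_append_cons_of_exists_mem (hS.insert_of_deleteEdge (Or.inl rfl) p hp)
  have hqs := hp.prefix_to
  obtain ⟨x, hxT, hx⟩ := hT (q ++ [s])
    ⟨hqs.1.deleteEdge_of_not_mem fun hu => hq u hu (mem_insert _ _), hqs.2.1, s, hs, by simp⟩
  exact ⟨x, hxT, by simp at hx ⊢; tauto⟩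

theorem Separates.of_deleteEdge_insert_right (hS : Separates (deleteEdge R u v) X Y S)
    (hT : Separates (deleteEdge R u v) (insert v S) Y T) : Separates R X Y T := by
  rw [← separates_flip, flip_deleteEdge] at hS hT
  exact separates_flip.1 (hS.of_deleteEdge_insert hT)

theorem HasDisjointWalks.exists_trimmed [Finite V] (h : HasDisjointWalks R X T k)
    (hT : T.ncard ≤ k) :
    ∃ (q : Fin k → List V) (l : Fin k → V),
      (∀ i, IsWalk R X {l i} (q i ++ [l i]) ∧ l i ∈ T ∧ ∀ y ∈ q i, y ∉ T) ∧
      (Pairwise fun i j => (q i ++ [l i]).Disjoint (q j ++ [l j])) ∧ ∀ s ∈ T, ∃ i, l i = s := by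
  obtain ⟨P, hP, hPd⟩ := h
  have hcut : ∀ i, ∃ q t r, P i = q ++ t :: r ∧ t ∈ T ∧ ∀ y ∈ q, y ∉ T := fun i =>
    List.exists_eq_append_cons_of_exists_mem <| by
      obtain ⟨b, hb, hlast⟩ := (hP i).2.2
      exact ⟨b, hb, List.mem_of_getLast? hlast⟩
  choose q l r hqlr hlT hqT using hcut
  have hsub : ∀ i, q i ++ [l i] ⊆ P i := fun i => by simp [hqlr i]
  have hd : Pairwise fun i j => (q i ++ [l i]).Disjoint (q j ++ [l j]) := fun i j hij =>
    List.disjoint_of_subset_left (hsub i) (List.disjoint_of_subset_right (hsub j) (hPd hij))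
  have hl_inj : Function.Injective l := fun i j hij => by
    by_contra hne
    have hi : l i ∈ q i ++ [l i] := by simp
    have hj : l i ∈ q j ++ [l j] := by simp [hij]
    exact hd hne hi hj
  have hrange : range l = T := Set.eq_of_subset_of_ncard_le (range_subset_iff.2 hlT)
    (by rwa [ncard_range_of_injective hl_inj, Nat.card_fin])
  exact ⟨q, l, fun i => ⟨(hqlr i ▸ hP i).prefix_to, hlT i, hqT i⟩, hd,
    fun s hs => by rwa [← hrange] at hs⟩

theorem HasDisjointWalks.exists_trimmed_right [Finite V] (h : HasDisjointWalks R T Y k)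
    (hT : T.ncard ≤ k) :
    ∃ (m : Fin k → V) (r : Fin k → List V),
      (∀ j, IsWalk R {m j} Y (m j :: r j) ∧ m j ∈ T ∧ ∀ y ∈ r j, y ∉ T) ∧
      (Pairwise fun i j => (m i :: r i).Disjoint (m j :: r j)) ∧ ∀ s ∈ T, ∃ j, m j = s := by
  obtain ⟨q, l, hq, hd, hl⟩ := h.flip.exists_trimmed hT
  refine ⟨l, fun j => (q j).reverse, fun j => ⟨?_, (hq j).2.1, by simpa using (hq j).2.2⟩,
    fun i j hij x hi hj => hd hij (by simpa [or_comm] using hi) (by simpa [or_comm] using hj), hl⟩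
  exact isWalk_reverse.1 (by simpa using (hq j).1)

theorem Separates.eq_of_mem_of_mem {l m : V} (hS : Separates R X Y S)
    (hl : IsWalk R X {l} (q ++ [l])) (hq : ∀ y ∈ q, y ∉ S)
    (hm : IsWalk R {m} Y (m :: r)) (hr : ∀ y ∈ r, y ∉ S)
    (hxl : x ∈ q ++ [l]) (hxm : x ∈ m :: r) : x ∈ S ∧ x = l ∧ x = m := by
  obtain ⟨a, b, hab⟩ := List.append_of_mem hxl
  obtain ⟨c, d, hcd⟩ := List.append_of_mem hxm
  -- Splicing the walks at `x` gives a walk that must meet `S`, which pins `x` down.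
  obtain ⟨w, hw, hwsub⟩ :=
    (hab ▸ hl).prefix_to.glue (hcd ▸ hm).suffix_from Relation.ReflGen.refl
  obtain ⟨s, hsS, hsw⟩ := hS w hw
  rcases hwsub s hsw with hs | hs
  · obtain ⟨rfl, rfl⟩ := List.eq_getLast_of_append_cons_eq_concat hab.symm hq hsS hs
    refine ⟨hsS, rfl, ?_⟩
    rcases List.mem_cons.1 hxm with h | h
    · exact h
    · exact absurd hsS (hr _ h)
  · obtain ⟨rfl, rfl⟩ := List.eq_head_of_append_cons_eq_cons hcd.symm hr hsS hs
    refine ⟨hsS, ?_, rfl⟩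
    rcases List.mem_append.1 hxl with h | h
    · exact absurd hsS (hq _ h)
    · simpa using h

theorem HasDisjointWalks.glue {q r : Fin k → List V} {l m : Fin k → V} (huv : R u v)
    (hv : v ∉ S) (hS : Separates (deleteEdge R u v) X Y S)
    (hq : ∀ i, IsWalk (deleteEdge R u v) X {l i} (q i ++ [l i])) (hl : ∀ i, l i ∈ insert u S)
    (hqS : ∀ i, ∀ y ∈ q i, y ∉ S) (hqd : Pairwise fun i j => (q i ++ [l i]).Disjoint (q j ++ [l j]))
    (hr : ∀ j, IsWalk (deleteEdge R u v) {m j} Y (m j :: r j)) (hrS : ∀ j, ∀ y ∈ r j, y ∉ S)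
    (hrd : Pairwise fun i j => (m i :: r i).Disjoint (m j :: r j))
    (hm : ∀ s ∈ insert v S, ∃ j, m j = s) :
    HasDisjointWalks R X Y k := by
  classical
  -- `g` sends each endpoint `l i` to the start of its partner walk.
  let g : V → V := fun x => if x ∈ S then x else v
  have hlu : ∀ i, l i ∉ S → l i = u := fun i hlS => by simpa [hlS] using hl i
  have hg : ∀ i, Relation.ReflGen R (l i) (g (l i)) ∧ g (l i) ∈ insert v S := fun i => by
    by_cases hlS : l i ∈ S
    · simp only [g, if_pos hlS]
      exact ⟨.refl, mem_insert_of_mem _ hlS⟩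
    · simp only [g, if_neg hlS]
      exact ⟨hlu i hlS ▸ .single huv, mem_insert _ _⟩
  have hg_inj : ∀ i j, g (l i) = g (l j) → i = j := fun i j hij => by
    by_contra hne
    have hlij : l i = l j := by
      simp only [g] at hij
      split_ifs at hij with hi hj hj
      · exact hij
      · exact absurd (hij ▸ hi) hv
      · exact absurd (hij ▸ hj) hv
      · rw [hlu i hi, hlu j hj]
    have hi : l i ∈ q i ++ [l i] := by simp
    have hj : l i ∈ q j ++ [l j] := by simp [hlij]
    exact hqd hne hi hj
  choose τ hτ using fun i => hm _ (hg i).2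
  have hcross : ∀ i j x, x ∈ q i ++ [l i] → x ∈ m (τ j) :: r (τ j) → i = j := fun i j x hi hj => by
    obtain ⟨hxS, rfl, hxm⟩ := hS.eq_of_mem_of_mem (hq i) (hqS i) (hr (τ j)) (hrS (τ j)) hi hj
    exact hg_inj i j (by simp only [g, if_pos hxS]; rw [hxm, hτ])
  choose W hW hWsub using fun i =>
    ((hq i).imp fun _ _ h => h.1).glue ((hr (τ i)).imp fun _ _ h => h.1) (hτ i ▸ (hg i).1)
  refine ⟨W, hW, fun i j hij x hxi hxj => ?_⟩
  rcases hWsub i x hxi with h1 | h1 <;> rcases hWsub j x hxj with h2 | h2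
  · exact hqd hij h1 h2
  · exact hij (hcross i j x h1 h2)
  · exact hij (hcross j i x h2 h1).symm
  · exact hrd (fun h' => hij (hg_inj i j (by rw [← hτ i, ← hτ j, h']))) h1 h2

theorem HasDisjointWalks.of_separates_deleteEdge [Finite V] (huv : R u v)
    (h : ∀ T, Separates R X Y T → k ≤ T.ncard)
    (hS : Separates (deleteEdge R u v) X Y S) (hSk : S.ncard < k)
    (ih : ∀ X Y, (∀ T, Separates (deleteEdge R u v) X Y T → k ≤ T.ncard) →
      HasDisjointWalks (deleteEdge R u v) X Y k) :
    HasDisjointWalks R X Y k := by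
  have hcard : ∀ w, (insert w S).ncard ≤ k := fun w => (ncard_insert_le w S).trans hSk
  have hv : v ∉ S := fun hv => by
    have := h _ (hS.insert_of_deleteEdge (Or.inr rfl))
    rw [insert_eq_of_mem hv] at this
    omega
  obtain ⟨q, l, hq, hqd, -⟩ :=
    (ih X (insert u S) fun T hT => h T (hS.of_deleteEdge_insert hT)).exists_trimmed (hcard u)
  obtain ⟨m, r, hr, hrd, hm⟩ :=
    (ih (insert v S) Y fun T hT => h T (hS.of_deleteEdge_insert_right hT)).exists_trimmed_right
      (hcard v)
  exact .glue huv hv hS (fun i => (hq i).1) (fun i => (hq i).2.1)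
    (fun i y hy hyS => (hq i).2.2 y hy (mem_insert_of_mem _ hyS)) hqd (fun j => (hr j).1)
    (fun j y hy hyS => (hr j).2.2 y hy (mem_insert_of_mem _ hyS)) hrd hm

theorem HasDisjointWalks.of_forall_not_rel [Finite V] (hR : ∀ a b, ¬R a b)
    (h : ∀ T, Separates R X Y T → k ≤ T.ncard) : HasDisjointWalks R X Y k := by
  have hsep : Separates R X Y (X ∩ Y) := by
    rintro p ⟨hch, ⟨a, ha, hpa⟩, b, hb, hpb⟩
    obtain ⟨p, rfl⟩ := List.head?_eq_some_iff.1 hpa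
    cases p with
    | nil => exact ⟨a, ⟨ha, by simp_all⟩, List.mem_singleton_self a⟩
    | cons c p => exact absurd (List.isChain_cons_cons.1 hch).1 (hR a c)
  have hk : k ≤ Nat.card ↥(X ∩ Y) := by
    rw [Nat.card_coe_set_eq]
    exact h _ hsep
  let e : Fin k → ↥(X ∩ Y) := fun i => (Finite.equivFin _).symm (Fin.castLE hk i)
  have he : Function.Injective e :=
    (Finite.equivFin _).symm.injective.comp (Fin.castLE_injective hk)
  refine ⟨fun i => [(e i : V)], fun i => isWalk_singleton.2 (e i).2,
    fun i j hij x hi hj => hij (he (Subtype.ext ?_))⟩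
  simp_all

/-- **Menger's theorem** -/
theorem HasDisjointWalks.of_forall_separates [Finite V] (R : V → V → Prop) (X Y : Set V)
    (h : ∀ S, Separates R X Y S → k ≤ S.ncard) : HasDisjointWalks R X Y k := by
  induction R using WellFoundedLT.induction generalizing X Y with
  | _ R ih =>
  by_cases hR : ∃ u v, R u v
  · obtain ⟨u, v, huv⟩ := hR
    by_cases hdel : ∀ S, Separates (deleteEdge R u v) X Y S → k ≤ S.ncard
    · exact (ih _ (deleteEdge_lt huv) X Y hdel).imp fun _ _ h => h.1
    · obtain ⟨S, hS, hSk⟩ : ∃ S, Separates (deleteEdge R u v) X Y S ∧ S.ncard < k := by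
        simpa using hdel
      exact .of_separates_deleteEdge huv h hS hSk (ih _ (deleteEdge_lt huv))
  · simp only [not_exists] at hR
    exact .of_forall_not_rel hR h

end Menger

section Application

variable {E : V → V → Prop} {F B S : Set V} {t : V} {p : List V}

theorem IsWalk.exists_pathFromTo
    (h : IsWalk (fun a b => E a b ∧ b ∉ insert t F) B {w | E w t} p) (ht : t ∉ B) :
    ∃ p', PathFromTo E B t p' ∧ Excludes F p' ∧ ∀ x ∈ p', x ∈ p ∨ x = t := by
  obtain ⟨p, hp, hnd, hsub⟩ := h.exists_nodup
  obtain ⟨a, -, hpa⟩ := hp.2.1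
  obtain ⟨p, rfl⟩ := List.head?_eq_some_iff.1 hpa
  have haB := hp.head_mem
  have htail := hp.1.forall_mem_tail
  simp only [List.tail_cons, mem_insert_iff, not_or] at htail
  have htp : t ∉ a :: p := by
    rintro (_ | ⟨_, htp⟩)
    · exact ht haB
    · exact (htail t htp).1 rfl
  refine ⟨a :: p ++ [t], ⟨⟨by simp, ?_, ?_⟩, ⟨a, haB, rfl⟩, List.getLast?_concat⟩, ?_, ?_⟩
  · exact List.nodup_append.2 ⟨hnd, List.nodup_singleton t,
      fun x hx y hy hxy => htp (by simp_all)⟩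
  · obtain ⟨b, hbt, hpb⟩ := hp.2.2
    refine (hp.1.imp fun _ _ h => h.1).append (List.isChain_singleton t) fun x hx y hy => ?_
    obtain rfl : x = b := Option.some_inj.1 (hx.symm.trans hpb)
    obtain rfl : t = y := by simpa using hy
    exact hbt
  · intro x hx
    simp only [List.cons_append, List.tail_cons, List.dropLast_concat] at hx
    exact (htail x hx).2
  · intro x hx
    simp only [List.mem_append, List.mem_singleton] at hx
    exact hx.imp_left (@hsub x)

theorem disjPaths_of_hasDisjointWalks {n : ℕ} (ht : t ∉ B)
    (h : HasDisjointWalks (fun a b => E a b ∧ b ∉ insert t F) B {w | E w t} n) :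
    DisjPaths E F B t n := by
  obtain ⟨P, hP, hPd⟩ := h
  choose Q hQ hQF hQP using fun i => (hP i).exists_pathFromTo ht
  refine ⟨Q, fun i => ⟨hQ i, hQF i⟩, fun i j hij x hxi hxj => ?_⟩
  rcases hQP i x hxi with hi | rfl
  · rcases hQP j x hxj with hj | rfl
    · exact absurd hj (hPd hij hi)
    · rfl
  · rfl

def reachingSet (E : V → V → Prop) (F S : Set V) (t : V) : Set V :=
  {x | Relation.ReflTransGen (fun a b => a ∉ insert t S ∧ E a b ∧ b ∉ F) x t}

theorem exists_isWalk_of_mem_reachingSet {x : V} (h : x ∈ reachingSet E F S t) (hx : x ≠ t) :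
    ∃ p, IsWalk (fun a b => E a b ∧ b ∉ insert t F) {x} {w | E w t} p ∧ ∀ a ∈ p, a ∉ S := by
  induction h using Relation.ReflTransGen.head_induction_on with
  | refl => exact absurd rfl hx
  | @head x y hxy hyt ih =>
    simp only [mem_insert_iff, not_or] at hxy
    obtain ⟨⟨-, hxS⟩, hExy, hyF⟩ := hxy
    by_cases hy : y = t
    · subst hy
      exact ⟨[x], isWalk_singleton.2 ⟨rfl, hExy⟩, by simpa using hxS⟩
    · obtain ⟨p, hp, hpS⟩ := ih hy
      obtain ⟨w, hw, hwsub⟩ := (isWalk_singleton.2 ⟨mem_singleton x, mem_singleton x⟩).glue hp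
        (Relation.ReflGen.single (a := x) (b := y) ⟨hExy, by simp [hy, hyF]⟩)
      refine ⟨w, hw, fun a ha => ?_⟩
      rcases hwsub a ha with ha | ha
      · simp_all
      · exact hpS a ha

theorem Separates.not_mem_reachingSet {b : V}
    (hS : Separates (fun a b => E a b ∧ b ∉ insert t F) B {w | E w t} S) (hb : b ∈ B)
    (hbt : b ≠ t) : b ∉ reachingSet E F S t := fun hbA' => by
  obtain ⟨p, hp, hpS⟩ := exists_isWalk_of_mem_reachingSet hbA' hbt
  obtain ⟨s, hs, hsp⟩ := hS p (hp.mono (singleton_subset_iff.2 hb) subset_rfl)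
  exact hpS s hsp hs

theorem inNbr_compl_reachingSet_subset :
    inNbr E (reachingSet E F S t)ᶜ (reachingSet E F S t \ F) ⊆ S := by
  rintro u ⟨huA', x, ⟨hxA', hxF⟩, hux⟩
  by_contra huS
  have hut : u ≠ t := fun hut => huA' (hut ▸ Relation.ReflTransGen.refl)
  exact huA' (Relation.ReflTransGen.head ⟨by simp [hut, huS], hux, hxF⟩ hxA')

end Application

theorem B_does_not_propagate_A_general [Fintype V] (E : V → V → Prop) (f : ℕ) (F A B : Set V)
    (hpart : A ∪ B = Set.univ) (hdisj : A ∩ B = ∅)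
    (hB : (B \ F).Nonempty)
    (hnp : ¬ Propagates E f F B (A \ F)) :
    ∃ A' B' : Set V, A' ∪ B' = Set.univ ∧ A' ∩ B' = ∅ ∧
      A' ⊆ A ∧ B ⊆ B' ∧ (A' \ F).Nonempty ∧ (B' \ F).Nonempty ∧
      (inNbr E B' (A' \ F)).ncard ≤ f := by
  obtain ⟨t, htA, hnp⟩ : ∃ t ∈ A \ F, ¬DisjPaths E F B t (f + 1) := by
    simpa only [Propagates, not_forall, exists_prop] using hnp
  have htB : t ∉ B := fun htB => (hdisj ▸ mem_inter htA.1 htB : t ∈ (∅ : Set V))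
  obtain ⟨S, hS, hSf⟩ : ∃ S, Separates (fun a b => E a b ∧ b ∉ insert t F) B {w | E w t} S ∧
      S.ncard ≤ f := by
    by_contra! h
    exact hnp (disjPaths_of_hasDisjointWalks htB (.of_forall_separates _ _ _ h))
  have hBA' : ∀ b ∈ B, b ∉ reachingSet E F S t := fun b hb =>
    hS.not_mem_reachingSet hb (ne_of_mem_of_not_mem hb htB)
  refine ⟨reachingSet E F S t, (reachingSet E F S t)ᶜ, union_compl_self _, inter_compl_self _,
    fun x hx => ?_, hBA', ⟨t, Relation.ReflTransGen.refl, htA.2⟩,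
    hB.mono (sdiff_subset_sdiff_left hBA'), ?_⟩
  · exact (hpart ▸ mem_univ x : x ∈ A ∪ B).resolve_right fun hxB => hBA' x hxB hx
  · exact (ncard_le_ncard inNbr_compl_reachingSet_subset (toFinite S)).trans hSf

/-- If `B` does not (f+1)-propagate to `A − F` avoiding `F`, then there is a partition
`(A', B')` refining `(A, B)` with the in-neighborhood of `A' − F` inside `B'` of size ≤ f. -/
theorem B_does_not_propagate_A [Fintype V] (E : V → V → Prop) (f : ℕ) (F A B : Set V)
    (hF : F.ncard ≤ f)
    (hpart : A ∪ B = Set.univ) (hdisj : A ∩ B = ∅)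
    (hA : (A \ F).Nonempty) (hB : (B \ F).Nonempty)
    (hnp : ¬ Propagates E f F B (A \ F)) :
    ∃ A' B' : Set V, A' ∪ B' = Set.univ ∧ A' ∩ B' = ∅ ∧
      A' ⊆ A ∧ B ⊆ B' ∧ (A' \ F).Nonempty ∧ (B' \ F).Nonempty ∧
      (inNbr E B' (A' \ F)).ncard ≤ f :=
  B_does_not_propagate_A_general E f F A B hpart hdisj hB hnp
end
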